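/- arXiv:2111.14529 — 2 statements merged into one kernel-verified Lean document; each statement's English description precedes it below -/
import Mathlib

section
/- For every integer n≥1 and every ε>0 there exists a constant c_ε>0 (depending only on n and ε) such that for every continuously differentiable, compactly supported function f : ℝⁿ → ℝ: ∫_{ℝⁿ}|f|^{2+2/n} dx ≤ ε (∫_{ℝⁿ}(|f|² + |∇f|²) dx) (∫_{ℝⁿ}|f|·|log|f|| dx)^{2/n} + c_ε ∫_{ℝⁿ}|f| dx, where the integrand |f||log|f|| is interpreted as 0 at points where f=0. -/
open MeasureTheory Real Filter

/-- `x ↦ (max x 0)^2`, a C¹ function. -/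
noncomputable def Psq (x : ℝ) : ℝ := (max x 0)^2

lemma Psq_nonneg (x : ℝ) : 0 ≤ Psq x := sq_nonneg _

lemma Psq_of_nonpos {x : ℝ} (h : x ≤ 0) : Psq x = 0 := by
  simp [Psq, max_eq_right h]

lemma hasDerivAt_Psq (x : ℝ) : HasDerivAt Psq (2 * max x 0) x := by
  rcases lt_trichotomy x 0 with hx | rfl | hx
  · have h0 : HasDerivAt (fun _ : ℝ => (0:ℝ)) (2 * max x 0) x := by
      simpa [max_eq_right hx.le] using (hasDerivAt_const x (0:ℝ))
    apply h0.congr_of_eventuallyEq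
    filter_upwards [Iio_mem_nhds hx] with y hy
    simp [Psq, max_eq_right (le_of_lt (Set.mem_Iio.mp hy))]
  · rw [hasDerivAt_iff_isLittleO]
    rw [Asymptotics.isLittleO_iff]
    intro c hc
    filter_upwards [Metric.ball_mem_nhds (0:ℝ) hc] with y hy
    simp only [Metric.mem_ball, Real.dist_eq, sub_zero] at hy
    have h1 : |max y 0| ≤ |y| := by
      rcases le_or_gt y 0 with h | h
      · simp [max_eq_right h, abs_nonneg]
      · simp [max_eq_left h.le]
    have hval : ‖Psq y - Psq 0 - (y - 0) • (2 * max (0:ℝ) 0)‖ = |max y 0|^2 := by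
      simp [Psq, sq_abs]
    rw [hval]
    calc |max y 0|^2 ≤ |y| * |y| := by
          have := pow_le_pow_left₀ (abs_nonneg (max y 0)) h1 2
          nlinarith [this]
      _ ≤ c * ‖y - 0‖ := by
        simp only [sub_zero, Real.norm_eq_abs]
        nlinarith [abs_nonneg y]
  · have h0 : HasDerivAt (fun y : ℝ => y^2) (2 * max x 0) x := by
      have := hasDerivAt_pow 2 x
      simpa [max_eq_left hx.le, mul_comm] using this
    apply h0.congr_of_eventuallyEq
    filter_upwards [Ioi_mem_nhds hx] with y hy
    simp [Psq, max_eq_left (Set.mem_Ioi.mp hy).le]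

lemma deriv_Psq (x : ℝ) : deriv Psq x = 2 * max x 0 := (hasDerivAt_Psq x).deriv

lemma contDiff_Psq : ContDiff ℝ 1 Psq := by
  rw [contDiff_one_iff_deriv]
  refine ⟨fun x => (hasDerivAt_Psq x).differentiableAt, ?_⟩
  have : deriv Psq = fun x => 2 * max x 0 := funext deriv_Psq
  rw [this]
  exact continuous_const.mul (continuous_id.max continuous_const)

/-- Smooth truncation helper: `rho M s ≈ ((s - M²)₊)² / s^{3/2}`. -/
noncomputable def rho (M : ℝ) (s : ℝ) : ℝ := Psq (s - M^2) / (Real.sqrt s)^3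

lemma rho_nonneg (M s : ℝ) : 0 ≤ rho M s :=
  div_nonneg (Psq_nonneg _) (by positivity)

lemma rho_eq_zero {M s : ℝ} (h : s ≤ M^2) : rho M s = 0 := by
  simp [rho, Psq_of_nonpos (by linarith : s - M^2 ≤ 0)]

lemma contDiffAt_rho {M : ℝ} (hM : 0 < M) (s : ℝ) : ContDiffAt ℝ 1 (rho M) s := by
  rcases lt_or_ge s (M^2) with hs | hs
  · have : (fun _ : ℝ => (0:ℝ)) =ᶠ[nhds s] rho M := by
      filter_upwards [Iio_mem_nhds hs] with u hu
      exact (rho_eq_zero hu.le).symm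
    exact ContDiffAt.congr_of_eventuallyEq contDiffAt_const this.symm
  · have hs0 : 0 < s := lt_of_lt_of_le (by positivity) hs
    have hnum : ContDiffAt ℝ 1 (fun u : ℝ => Psq (u - M^2)) s :=
      contDiff_Psq.contDiffAt.comp s ((contDiffAt_id.sub contDiffAt_const))
    have hden : ContDiffAt ℝ 1 (fun u : ℝ => (Real.sqrt u)^3) s :=
      (Real.contDiffAt_sqrt hs0.ne').pow 3
    exact hnum.div hden (by positivity)

lemma hasDerivAt_rho {M : ℝ} (hM : 0 < M) {s : ℝ} (hs : 0 < s) :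
    HasDerivAt (rho M)
      ((2 * max (s - M^2) 0 * (Real.sqrt s)^3
        - Psq (s - M^2) * (3 * (Real.sqrt s)^2 * (1 / (2 * Real.sqrt s)))) / ((Real.sqrt s)^3)^2)
      s := by
  have hnum : HasDerivAt (fun u : ℝ => Psq (u - M^2)) (2 * max (s - M^2) 0) s := by
    have := (hasDerivAt_Psq (s - M^2)).comp s ((hasDerivAt_id s).sub_const (M^2))
    simpa [Function.comp_def] using this
  have hden : HasDerivAt (fun u : ℝ => (Real.sqrt u)^3)
      (3 * (Real.sqrt s)^2 * (1 / (2 * Real.sqrt s))) s := by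
    have := (Real.hasDerivAt_sqrt hs.ne').pow 3
    simpa [Pi.pow_def, mul_comm, mul_assoc, mul_left_comm] using this
  exact hnum.div hden (by positivity)

lemma deriv_rho_bound {M : ℝ} (hM : 0 < M) (t : ℝ) :
    |deriv (rho M) (t^2)| * (2 * |t|) ≤ 4 := by
  rcases lt_or_ge (t^2) (M^2) with hs | hs
  · have : deriv (rho M) (t^2) = 0 := by
      have hev : rho M =ᶠ[nhds (t^2)] (fun _ : ℝ => (0:ℝ)) := by
        filter_upwards [Iio_mem_nhds hs] with u hu
        exact rho_eq_zero hu.le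
      rw [hev.deriv_eq]
      simp
    rw [this, abs_zero, zero_mul]
    norm_num
  · have ht0 : t ≠ 0 := by
      intro h; rw [h] at hs; nlinarith
    have hs0 : 0 < t^2 := by positivity
    set σ := |t| with hσdef
    have hσ : 0 < σ := abs_pos.2 ht0
    have hσM : M ≤ σ := by
      nlinarith [abs_nonneg t, sq_abs t]
    have hsqrt : Real.sqrt (t^2) = σ := Real.sqrt_sq_eq_abs t
    have hmax : max (t^2 - M^2) 0 = σ^2 - M^2 := by
      rw [max_eq_left (by nlinarith [sq_abs t])]
      rw [sq_abs]
    have hPsq : Psq (t^2 - M^2) = (σ^2 - M^2)^2 := by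
      rw [Psq, hmax]
    have hD := (hasDerivAt_rho hM hs0).deriv
    rw [hD, hsqrt, hPsq, hmax]
    have hσne : σ ≠ 0 := hσ.ne'
    have hval : (2 * (σ^2 - M^2) * σ^3 - (σ^2 - M^2)^2 * (3 * σ^2 * (1/(2*σ)))) / (σ^3)^2
        = (σ^2 - M^2) * (σ^2 + 3*M^2) / (2 * σ^5) := by
      field_simp
      ring
    rw [hval]
    have h1 : 0 ≤ (σ^2 - M^2) * (σ^2 + 3*M^2) / (2 * σ^5) := by
      apply div_nonneg _ (by positivity)
      apply mul_nonneg (by nlinarith) (by nlinarith)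
    rw [abs_of_nonneg h1]
    rw [div_mul_eq_mul_div, div_le_iff₀ (by positivity)]
    have hA : σ^2 - M^2 ≤ σ^2 := by nlinarith
    have hB : σ^2 + 3*M^2 ≤ 4*σ^2 := by nlinarith
    have hAB : (σ^2 - M^2) * (σ^2 + 3*M^2) ≤ σ^2 * (4*σ^2) := by
      apply mul_le_mul hA hB (by nlinarith) (sq_nonneg σ)
    nlinarith [hAB, hσ, mul_pos hσ (mul_pos hσ (mul_pos hσ (mul_pos hσ hσ)))]

lemma rho_le_abs {M : ℝ} (hM : 0 < M) (t : ℝ) : rho M (t^2) ≤ |t| := by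
  rcases eq_or_ne t 0 with rfl | ht
  · have h0 : rho M 0 = 0 := rho_eq_zero (by nlinarith [sq_nonneg M])
    simp [h0]
  · have hσ : 0 < |t| := abs_pos.2 ht
    rw [rho, Real.sqrt_sq_eq_abs, div_le_iff₀ (by positivity)]
    have h1 : max (t^2 - M^2) 0 ≤ t^2 := by
      apply max_le (by nlinarith) (by positivity)
    have h2 : (0:ℝ) ≤ max (t^2 - M^2) 0 := le_max_right _ _
    calc Psq (t^2 - M^2) ≤ (t^2)^2 := by
          rw [Psq]; exact pow_le_pow_left₀ h2 h1 2
      _ = |t| * |t|^3 := by rw [← sq_abs t]; ring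

lemma rho_eq_zero_of_abs_le {M : ℝ} {t : ℝ} (h : |t| ≤ M) : rho M (t^2) = 0 :=
  rho_eq_zero (by nlinarith [sq_abs t, abs_nonneg t])

lemma abs_le_two_mul_rho {M : ℝ} (hM : 0 < M) {t : ℝ} (h : 2*M ≤ |t|) :
    |t| ≤ 2 * rho M (t^2) := by
  have hσ : 0 < |t| := by linarith
  have h4 : 4*M^2 ≤ t^2 := by nlinarith [sq_abs t]
  have hmax : max (t^2 - M^2) 0 = t^2 - M^2 := by
    rw [max_eq_left]; nlinarith
  rw [rho, Real.sqrt_sq_eq_abs, Psq, hmax, ← mul_div_assoc, le_div_iff₀ (by positivity)]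
  have ht3 : |t| * |t|^3 = t^2 * t^2 := by rw [← sq_abs t]; ring
  rw [ht3]
  nlinarith [mul_nonneg (sub_nonneg.2 h4) (sq_nonneg t), sq_nonneg M, sq_nonneg t]
section Trunc

variable {E : Type*} [NormedAddCommGroup E] [NormedSpace ℝ E]

lemma contDiff_trunc {M : ℝ} (hM : 0 < M) {f : E → ℝ} (hf : ContDiff ℝ 1 f) :
    ContDiff ℝ 1 (fun x => rho M (f x ^ 2)) := by
  rw [contDiff_iff_contDiffAt]
  intro x
  exact (contDiffAt_rho hM _).comp x ((hf.contDiffAt).pow 2)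

lemma hasCompactSupport_trunc {M : ℝ} (hM : 0 < M) {f : E → ℝ} (h2f : HasCompactSupport f) :
    HasCompactSupport (fun x => rho M (f x ^ 2)) := by
  have : (fun x => rho M (f x ^ 2)) = (fun t : ℝ => rho M (t ^ 2)) ∘ f := rfl
  rw [this]
  apply h2f.comp_left
  have h0 : ((0:ℝ)^2) ≤ M^2 := by nlinarith [sq_nonneg M]
  exact rho_eq_zero h0

lemma hasFDerivAt_trunc {M : ℝ} (hM : 0 < M) {f : E → ℝ} (hf : ContDiff ℝ 1 f) (x : E) :
    HasFDerivAt (fun x => rho M (f x ^ 2))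
      ((deriv (rho M) (f x ^ 2) * (2 * f x)) • fderiv ℝ f x) x := by
  have hfd : HasFDerivAt f (fderiv ℝ f x) x := (hf.differentiable one_ne_zero x).hasFDerivAt
  have hpow : HasFDerivAt (fun x => f x ^ 2) ((2 * f x) • fderiv ℝ f x) x := by
    have h := hfd.fun_mul hfd
    have heq : (fun y => f y * f y) = fun x => f x ^ 2 := by funext y; ring
    rw [heq] at h
    rw [show (2 * f x) • fderiv ℝ f x = f x • fderiv ℝ f x + f x • fderiv ℝ f x by module]
    exact h
  have hrho : HasDerivAt (rho M) (deriv (rho M) (f x ^ 2)) (f x ^ 2) :=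
    ((contDiffAt_rho hM (f x ^ 2)).differentiableAt one_ne_zero).hasDerivAt
  have := hrho.comp_hasFDerivAt x hpow
  rw [smul_smul] at this
  exact this

lemma norm_fderiv_trunc_le {M : ℝ} (hM : 0 < M) {f : E → ℝ} (hf : ContDiff ℝ 1 f) (x : E) :
    ‖fderiv ℝ (fun x => rho M (f x ^ 2)) x‖ ≤ 4 * ‖fderiv ℝ f x‖ := by
  rw [(hasFDerivAt_trunc hM hf x).fderiv]
  rw [norm_smul]
  have h1 : ‖deriv (rho M) (f x ^ 2) * (2 * f x)‖ = |deriv (rho M) (f x ^ 2)| * (2 * |f x|) := by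
    rw [Real.norm_eq_abs, abs_mul, abs_mul]
    simp [abs_of_nonneg]
  rw [h1]
  have h2 := deriv_rho_bound hM (f x)
  have h3 : (0:ℝ) ≤ ‖fderiv ℝ f x‖ := norm_nonneg _
  nlinarith [abs_nonneg (deriv (rho M) (f x ^ 2)), abs_nonneg (f x)]

end Trunc

section OneDim

open Set

lemma oneDim_core {v : ℝ → ℝ} (hv : ContDiff ℝ 1 v) (h2v : HasCompactSupport v)
    (hv0 : ∀ t, 0 ≤ v t) :
    ∫ t, (v t)^4 ≤ 9 * (∫ t, (deriv v t)^2) * (∫ t, v t)^2 := by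
  have hvc : Continuous v := hv.continuous
  have hdc : Continuous (deriv v) := hv.continuous_deriv le_rfl
  -- integrability facts
  have hint4 : Integrable (fun t => (v t)^4) := by
    apply (hvc.fun_pow 4).integrable_of_hasCompactSupport
    exact h2v.comp_left (g := fun s : ℝ => s^4) (by simp)
  have hintv : Integrable v := hvc.integrable_of_hasCompactSupport h2v
  have hintd2 : Integrable (fun t => (deriv v t)^2) := by
    apply (hdc.fun_pow 2).integrable_of_hasCompactSupport
    exact h2v.deriv.comp_left (g := fun s : ℝ => s^2) (by simp)
  have hint2a : Integrable (fun t => (v t)^2 * |deriv v t|) := by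
    apply ((hvc.fun_pow 2).fun_mul hdc.abs).integrable_of_hasCompactSupport
    apply HasCompactSupport.mul_right
    exact h2v.comp_left (g := fun s : ℝ => s^2) (by simp)
  -- sup bound for v^3
  set S := ∫ t, (v t)^2 * |deriv v t| with hSdef
  have hS0 : 0 ≤ S := integral_nonneg (fun t => by positivity)
  have hw : ContDiff ℝ 1 (fun t => (v t)^3) := hv.pow 3
  have h2w : HasCompactSupport (fun t => (v t)^3) :=
    h2v.comp_left (g := fun s : ℝ => s^3) (by simp)
  have hderivw : ∀ t, deriv (fun t => (v t)^3) t = 3 * ((v t)^2 * deriv v t) := by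
    intro t
    have h := ((hv.differentiable one_ne_zero t).hasDerivAt.fun_pow 3).deriv
    rw [h]
    push_cast
    ring
  have hkey : ∀ x, (v x)^3 ≤ 3 * S := by
    intro x
    have h1 : (v x)^3 = ∫ t in Iic x, deriv (fun t => (v t)^3) t :=
      (HasCompactSupport.integral_Iic_deriv_eq hw h2w x).symm
    rw [h1]
    have hintw : Integrable (fun t => 3 * ((v t)^2 * |deriv v t|)) := (hint2a.const_mul 3)
    calc ∫ t in Iic x, deriv (fun t => (v t)^3) t
        ≤ ∫ t in Iic x, 3 * ((v t)^2 * |deriv v t|) := by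
          apply integral_mono ?_ (hintw.restrict) ?_
          · have : Integrable (fun t => deriv (fun t => (v t)^3) t) := by
              apply (hw.continuous_deriv le_rfl).integrable_of_hasCompactSupport h2w.deriv
            exact this.restrict
          · intro t
            rw [hderivw t]
            show 3 * (v t ^ 2 * deriv v t) ≤ 3 * (v t ^ 2 * |deriv v t|)
            have h2 : v t ^ 2 * deriv v t ≤ v t ^ 2 * |deriv v t| :=
              mul_le_mul_of_nonneg_left (le_abs_self _) (sq_nonneg _)
            linarith
      _ ≤ ∫ t, 3 * ((v t)^2 * |deriv v t|) := by
          apply setIntegral_le_integral hintw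
          filter_upwards with t
          positivity
      _ = 3 * S := by rw [hSdef, ← integral_const_mul]
  -- step 1 : ∫ v^4 ≤ 3 S ∫ v
  have h4S : ∫ t, (v t)^4 ≤ 3 * S * ∫ t, v t := by
    calc ∫ t, (v t)^4 ≤ ∫ t, 3 * S * v t := by
          apply integral_mono hint4 (hintv.const_mul _)
          intro t
          have h1 := hkey t
          have h2 := hv0 t
          calc (v t)^4 = (v t)^3 * v t := by ring
            _ ≤ 3 * S * v t := mul_le_mul_of_nonneg_right h1 h2
      _ = 3 * S * ∫ t, v t := integral_const_mul _ _
  -- Cauchy-Schwarz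
  have hCS : S ≤ (∫ t, (v t)^4) ^ (1/2:ℝ) * (∫ t, (deriv v t)^2) ^ (1/2:ℝ) := by
    have hconj : Real.HolderConjugate 2 2 := Real.HolderConjugate.two_two
    have hf2 : MemLp (fun t => (v t)^2) (ENNReal.ofReal 2) volume := by
      apply Continuous.memLp_of_hasCompactSupport (hvc.fun_pow 2)
      exact h2v.comp_left (g := fun s : ℝ => s^2) (by simp)
    have hg2 : MemLp (fun t => |deriv v t|) (ENNReal.ofReal 2) volume := by
      apply Continuous.memLp_of_hasCompactSupport hdc.abs
      exact h2v.deriv.comp_left (g := fun s : ℝ => |s|) (by simp)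
    have h := integral_mul_le_Lp_mul_Lq_of_nonneg hconj
      (Filter.Eventually.of_forall (fun t => sq_nonneg (v t)))
      (Filter.Eventually.of_forall (fun t => abs_nonneg (deriv v t))) hf2 hg2
    have e1 : ∀ x : ℝ, x ^ (2:ℝ) = x ^ (2:ℕ) := fun x => by
      rw [← Real.rpow_natCast x 2]; norm_num
    simp only [e1] at h
    calc S = ∫ t, (v t)^2 * |deriv v t| := hSdef
      _ ≤ (∫ t, ((v t)^2)^(2:ℕ)) ^ (1/2:ℝ) * (∫ t, (|deriv v t|)^(2:ℕ)) ^ (1/2:ℝ) := h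
      _ = (∫ t, (v t)^4) ^ (1/2:ℝ) * (∫ t, (deriv v t)^2) ^ (1/2:ℝ) := by
          congr 2
          · apply integral_congr_ae; filter_upwards with t; ring
          · apply integral_congr_ae; filter_upwards with t; rw [sq_abs]
  -- combine
  set Y := ∫ t, (v t)^4 with hYdef
  set D := ∫ t, (deriv v t)^2 with hDdef
  set I := ∫ t, v t with hIdef
  have hY0 : 0 ≤ Y := integral_nonneg (fun t => by positivity)
  have hD0 : 0 ≤ D := integral_nonneg (fun t => by positivity)
  have hI0 : 0 ≤ I := integral_nonneg (fun t => hv0 t)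
  rcases eq_or_lt_of_le hY0 with h0 | hYpos
  · rw [← h0]; positivity
  · have h2 : Y ≤ 3 * (Y ^ (1/2:ℝ) * D ^ (1/2:ℝ)) * I := by
      calc Y ≤ 3 * S * I := h4S
        _ ≤ 3 * (Y ^ (1/2:ℝ) * D ^ (1/2:ℝ)) * I := by
            apply mul_le_mul_of_nonneg_right _ hI0
            have := hCS
            nlinarith [hCS]
    have hYr : 0 < Y ^ (1/2:ℝ) := Real.rpow_pos_of_pos hYpos _
    have hYhalf : Y ^ (1/2:ℝ) * Y ^ (1/2:ℝ) = Y := by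
      rw [← Real.rpow_add hYpos]; norm_num
    have h3 : Y ^ (1/2:ℝ) ≤ 3 * D ^ (1/2:ℝ) * I := by
      have h4 : Y ^ (1/2:ℝ) * Y ^ (1/2:ℝ) ≤ (3 * D ^ (1/2:ℝ) * I) * Y ^ (1/2:ℝ) := by
        rw [hYhalf]
        calc Y ≤ 3 * (Y ^ (1/2:ℝ) * D ^ (1/2:ℝ)) * I := h2
          _ = (3 * D ^ (1/2:ℝ) * I) * Y ^ (1/2:ℝ) := by ring
      exact le_of_mul_le_mul_right h4 hYr
    have hDhalf : D ^ (1/2:ℝ) * D ^ (1/2:ℝ) = D := by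
      rcases eq_or_lt_of_le hD0 with hD | hD
      · rw [← hD, Real.zero_rpow (by norm_num : (1/2:ℝ) ≠ 0)]
        ring
      · rw [← Real.rpow_add hD]; norm_num
    calc Y = Y ^ (1/2:ℝ) * Y ^ (1/2:ℝ) := hYhalf.symm
      _ ≤ (3 * D ^ (1/2:ℝ) * I) * (3 * D ^ (1/2:ℝ) * I) := by
          apply mul_le_mul h3 h3 hYr.le
          positivity
      _ = 9 * (D ^ (1/2:ℝ) * D ^ (1/2:ℝ)) * I^2 := by ring
      _ = 9 * D * I^2 := by rw [hDhalf]

end OneDim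
section OneDimTransfer

noncomputable def oneE : ℝ ≃ₗᵢ[ℝ] EuclideanSpace ℝ (Fin 1) where
  toLinearEquiv := (LinearEquiv.funUnique (Fin 1) ℝ ℝ).symm.trans
    (WithLp.linearEquiv 2 ℝ (Fin 1 → ℝ)).symm
  norm_map' := fun t => by
    have : ∀ i : Fin 1,
        (((LinearEquiv.funUnique (Fin 1) ℝ ℝ).symm.trans
          (WithLp.linearEquiv 2 ℝ (Fin 1 → ℝ)).symm) t) i = t := fun i => rfl
    rw [EuclideanSpace.norm_eq]
    simp only [this]
    rw [Fin.sum_univ_one, Real.norm_eq_abs, sq_abs, Real.sqrt_sq_eq_abs]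

noncomputable def oneME : ℝ ≃ᵐ (EuclideanSpace ℝ (Fin 1)) :=
  (MeasurableEquiv.funUnique (Fin 1) ℝ).symm.trans
    (MeasurableEquiv.toLp 2 (Fin 1 → ℝ))

lemma oneE_eq_oneME : ⇑oneE = ⇑oneME := rfl

lemma oneE_mp : MeasurePreserving (⇑oneE) (volume : Measure ℝ)
    (volume : Measure (EuclideanSpace ℝ (Fin 1))) := by
  rw [oneE_eq_oneME]
  exact ((EuclideanSpace.volume_preserving_symm_measurableEquiv_toLp (Fin 1)).symm _).comp
    ((volume_preserving_funUnique (Fin 1) ℝ).symm _)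

lemma oneE_emb : MeasurableEmbedding (⇑oneE) := by
  rw [oneE_eq_oneME]
  exact oneME.measurableEmbedding

lemma coreGN_one {g : EuclideanSpace ℝ (Fin 1) → ℝ} (hg : ContDiff ℝ 1 g)
    (h2g : HasCompactSupport g) (hg0 : ∀ x, 0 ≤ g x) :
    ∫ x, (g x)^4 ≤ 9 * (∫ x, ‖fderiv ℝ g x‖^2) * (∫ x, g x)^2 := by
  set v : ℝ → ℝ := g ∘ oneE with hvdef
  have hv : ContDiff ℝ 1 v := hg.comp (oneE.contDiff)
  have h2v : HasCompactSupport v := h2g.comp_homeomorph oneE.toHomeomorph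
  have hv0 : ∀ t, 0 ≤ v t := fun t => hg0 _
  -- the continuous linear map of oneE has norm ≤ 1
  have hop : ‖(oneE.toContinuousLinearEquiv : ℝ →L[ℝ] EuclideanSpace ℝ (Fin 1))‖ ≤ 1 := by
    apply ContinuousLinearMap.opNorm_le_bound _ zero_le_one
    intro t
    rw [one_mul]
    have : ‖oneE t‖ = ‖t‖ := oneE.norm_map t
    simpa using this.le
  -- derivative comparison
  have hderiv : ∀ t, |deriv v t| ≤ ‖fderiv ℝ g (oneE t)‖ := by
    intro t
    have hdg : HasFDerivAt g (fderiv ℝ g (oneE t)) (oneE t) :=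
      (hg.differentiable one_ne_zero _).hasFDerivAt
    have he : HasFDerivAt (fun s : ℝ => (oneE s : EuclideanSpace ℝ (Fin 1)))
        (oneE.toContinuousLinearEquiv : ℝ →L[ℝ] EuclideanSpace ℝ (Fin 1)) t :=
      (oneE.toContinuousLinearEquiv : ℝ →L[ℝ] EuclideanSpace ℝ (Fin 1)).hasFDerivAt
    have hcomp : HasFDerivAt v
        ((fderiv ℝ g (oneE t)).comp
          (oneE.toContinuousLinearEquiv : ℝ →L[ℝ] EuclideanSpace ℝ (Fin 1))) t :=
      hdg.comp t he
    have h1 : |deriv v t| ≤ ‖fderiv ℝ v t‖ := by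
      rw [← fderiv_apply_one_eq_deriv]
      calc ‖fderiv ℝ v t 1‖ ≤ ‖fderiv ℝ v t‖ * ‖(1:ℝ)‖ := (fderiv ℝ v t).le_opNorm 1
        _ = ‖fderiv ℝ v t‖ := by simp
    calc |deriv v t| ≤ ‖fderiv ℝ v t‖ := h1
      _ = ‖(fderiv ℝ g (oneE t)).comp
          (oneE.toContinuousLinearEquiv : ℝ →L[ℝ] EuclideanSpace ℝ (Fin 1))‖ := by
            rw [hcomp.fderiv]
      _ ≤ ‖fderiv ℝ g (oneE t)‖ *
          ‖(oneE.toContinuousLinearEquiv : ℝ →L[ℝ] EuclideanSpace ℝ (Fin 1))‖ :=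
            ContinuousLinearMap.opNorm_comp_le _ _
      _ ≤ ‖fderiv ℝ g (oneE t)‖ := by
          nlinarith [norm_nonneg (fderiv ℝ g (oneE t)), hop]
  -- transfer integrals
  have tr : ∀ h : EuclideanSpace ℝ (Fin 1) → ℝ, ∫ x, h x = ∫ t, h (oneE t) :=
    fun h => (oneE_mp.integral_comp oneE_emb h).symm
  -- 1D result
  have h1d := oneDim_core hv h2v hv0
  -- compare derivative integrals
  have hfc : Continuous (fderiv ℝ g) := hg.continuous_fderiv one_ne_zero
  have hd2int : Integrable (fun t => ‖fderiv ℝ g (oneE t)‖^2) := by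
    have hE : HasCompactSupport (fun x : EuclideanSpace ℝ (Fin 1) => ‖fderiv ℝ g x‖^2) :=
      (h2g.fderiv (𝕜 := ℝ)).comp_left
        (g := fun L : (EuclideanSpace ℝ (Fin 1)) →L[ℝ] ℝ => ‖L‖^2) (by simp)
    exact ((hfc.norm.fun_pow 2).comp oneE.continuous).integrable_of_hasCompactSupport
      (hE.comp_homeomorph oneE.toHomeomorph)
  have hd2v : Integrable (fun t => (deriv v t)^2) := by
    apply ((hv.continuous_deriv le_rfl).fun_pow 2).integrable_of_hasCompactSupport
    exact (h2v.deriv).comp_left (g := fun s : ℝ => s^2) (by simp)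
  have hDle : (∫ t, (deriv v t)^2) ≤ ∫ t, ‖fderiv ℝ g (oneE t)‖^2 := by
    apply integral_mono hd2v hd2int
    intro t
    calc (deriv v t)^2 = |deriv v t|^2 := (sq_abs _).symm
      _ ≤ ‖fderiv ℝ g (oneE t)‖^2 := pow_le_pow_left₀ (abs_nonneg _) (hderiv t) 2
  -- conclude
  rw [tr (fun x => (g x)^4), tr (fun x => ‖fderiv ℝ g x‖^2), tr g]
  have hI0 : 0 ≤ ∫ t, v t := integral_nonneg hv0
  calc ∫ t, (v t)^4 ≤ 9 * (∫ t, (deriv v t)^2) * (∫ t, v t)^2 := h1d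
    _ ≤ 9 * (∫ t, ‖fderiv ℝ g (oneE t)‖^2) * (∫ t, v t)^2 := by nlinarith [sq_nonneg (∫ t, v t)]
  
end OneDimTransfer
section Absorb

open scoped ENNReal NNReal

lemma ennreal_absorb {X K : ℝ≥0∞} (hX : X ≠ ⊤) {β : ℝ} (hβ0 : 0 ≤ β) (hβ1 : β < 1)
    (h : X ≤ K * X ^ β) : X ≤ K ^ (1/(1-β)) := by
  rcases eq_or_ne X 0 with rfl | hX0
  · exact zero_le
  · have hXβ0 : X ^ β ≠ 0 := by
      intro h0
      rcases ENNReal.rpow_eq_zero_iff.mp h0 with ⟨h1, _⟩ | ⟨h1, _⟩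
      · exact hX0 h1
      · exact hX h1
    have hXβt : X ^ β ≠ ⊤ := ENNReal.rpow_ne_top_of_nonneg hβ0 hX
    have h1 : X ^ (1-β) * X ^ β = X := by
      rw [← ENNReal.rpow_add _ _ hX0 hX]
      norm_num
    have h2 : X ^ (1-β) * X ^ β ≤ K * X ^ β := by rw [h1]; exact h
    have h3 : X ^ (1-β) ≤ K := (ENNReal.mul_le_mul_iff_left hXβ0 hXβt).mp h2
    have hβpos : 0 < 1 - β := by linarith
    have h4 : (X ^ (1-β)) ^ (1/(1-β)) ≤ K ^ (1/(1-β)) :=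
      ENNReal.rpow_le_rpow h3 (by positivity)
    have h5 : (X ^ (1-β)) ^ (1/(1-β)) = X := by
      rw [← ENNReal.rpow_mul]
      rw [show (1-β) * (1/(1-β)) = 1 by rw [mul_one_div, div_self hβpos.ne']]
      exact ENNReal.rpow_one X
    rwa [h5] at h4

end Absorb

section CoreTwo

open scoped ENNReal NNReal

set_option maxHeartbeats 1000000 in
lemma coreGN_two {n : ℕ} (hn : 2 ≤ n) : ∃ B : ℝ, 0 < B ∧
    ∀ g : EuclideanSpace ℝ (Fin n) → ℝ, ContDiff ℝ 1 g → HasCompactSupport g →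
      (∀ x, 0 ≤ g x) →
    ∫ x, (g x) ^ ((2:ℝ) + 2/n) ≤
      B * (∫ x, ‖fderiv ℝ g x‖^2) * (∫ x, g x) ^ ((2:ℝ)/n) := by
  classical
  set nR : ℝ := (n : ℝ) with hnRdef
  have hn2 : (2:ℝ) ≤ nR := by rw [hnRdef]; exact_mod_cast hn
  have hn0 : (0:ℝ) < nR := by linarith
  have hn1 : (1:ℝ) < nR := by linarith
  have hne : nR ≠ 0 := by linarith
  have hne1 : nR - 1 ≠ 0 := by linarith
  set q : ℝ := 2 + 2/nR with hqdef
  have hq0 : 0 < q := by positivity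
  set p : ℝ := nR/(nR-1) with hpdef
  have hp0 : 0 < p := by
    apply div_pos hn0; linarith
  set α : ℝ := q * (nR - 1) / nR with hαdef
  have hα0 : 0 < α := by
    apply div_pos (mul_pos hq0 (by linarith)) hn0
  have hq2 : (2:ℝ) ≤ q := by
    rw [hqdef]
    have h0 : (0:ℝ) ≤ 2/nR := by positivity
    linarith
  have hα1 : 1 ≤ α := by
    rw [hαdef, le_div_iff₀ hn0, one_mul]
    have h1 : 2*(nR-1) ≤ q*(nR-1) := mul_le_mul_of_nonneg_right hq2 (by linarith)
    linarith
  have hαp : α * p = q := by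
    rw [hαdef, hpdef]
    field_simp
  set r : ℝ := 2*α - 2 with hrdef
  have hr0 : 0 ≤ r := by linarith
  set β : ℝ := (nR-2)/(2*(nR-1)) with hβdef
  have hβ0 : 0 ≤ β := by
    apply div_nonneg (by linarith) (by linarith)
  have hβ1 : β < 1 := by
    rw [hβdef, div_lt_one (by linarith)]
    linarith
  set γ : ℝ := 2*(nR-1)/nR with hγdef
  have hγ0 : 0 ≤ γ := div_nonneg (by linarith) hn0.le
  -- the constant
  set C : ℝ≥0 := lintegralPowLePowLIntegralFDerivConst
    (volume : Measure (EuclideanSpace ℝ (Fin n))) p with hCdef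
  set K : ℝ≥0∞ := ((C : ℝ≥0∞) * (ENNReal.ofReal α)^p) ^ γ with hKdef
  have hKt : K ≠ ⊤ := by
    apply ENNReal.rpow_ne_top_of_nonneg hγ0
    apply ENNReal.mul_ne_top ENNReal.coe_ne_top
    exact ENNReal.rpow_ne_top_of_nonneg hp0.le ENNReal.ofReal_ne_top
  refine ⟨K.toReal + 1, by positivity, ?_⟩
  intro g hg h2g hg0
  have hgc : Continuous g := hg.continuous
  have hfc : Continuous (fderiv ℝ g) := hg.continuous_fderiv one_ne_zero
  -- basic integrability
  have hgq_cont : Continuous (fun x => g x ^ q) :=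
    hgc.rpow_const (fun x => Or.inr hq0.le)
  have hgq_supp : HasCompactSupport (fun x => g x ^ q) :=
    h2g.comp_left (g := fun s : ℝ => s ^ q) (Real.zero_rpow hq0.ne')
  have hint_gq : Integrable (fun x => g x ^ q) :=
    hgq_cont.integrable_of_hasCompactSupport hgq_supp
  have hint_g : Integrable g := hgc.integrable_of_hasCompactSupport h2g
  have hint_d2 : Integrable (fun x => ‖fderiv ℝ g x‖^2) := by
    apply ((hfc.norm).fun_pow 2).integrable_of_hasCompactSupport
    exact (h2g.fderiv (𝕜 := ℝ)).comp_left
      (g := fun L : (EuclideanSpace ℝ (Fin n)) →L[ℝ] ℝ => ‖L‖^2) (by simp)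
  -- ENNReal quantities
  set X : ℝ≥0∞ := ∫⁻ x, ENNReal.ofReal (g x ^ q) with hXdef
  set G : ℝ≥0∞ := ∫⁻ x, ENNReal.ofReal (g x) with hGdef
  set A : ℝ≥0∞ := ∫⁻ x, ENNReal.ofReal (‖fderiv ℝ g x‖^2) with hAdef
  have hXeq : ENNReal.ofReal (∫ x, g x ^ q) = X :=
    ofReal_integral_eq_lintegral_ofReal hint_gq
      (Filter.Eventually.of_forall (fun x => Real.rpow_nonneg (hg0 x) q))
  have hGeq : ENNReal.ofReal (∫ x, g x) = G :=
    ofReal_integral_eq_lintegral_ofReal hint_g (Filter.Eventually.of_forall hg0)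
  have hAeq : ENNReal.ofReal (∫ x, ‖fderiv ℝ g x‖^2) = A :=
    ofReal_integral_eq_lintegral_ofReal hint_d2
      (Filter.Eventually.of_forall (fun x => sq_nonneg _))
  have hXt : X ≠ ⊤ := by rw [← hXeq]; exact ENNReal.ofReal_ne_top
  have hGt : G ≠ ⊤ := by rw [← hGeq]; exact ENNReal.ofReal_ne_top
  have hAt : A ≠ ⊤ := by rw [← hAeq]; exact ENNReal.ofReal_ne_top
  -- Sobolev inequality for w = g ^ α
  set w : EuclideanSpace ℝ (Fin n) → ℝ := fun x => g x ^ α with hwdef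
  have hw : ContDiff ℝ 1 w := by
    have h1 : ContDiff ℝ (1:ℕ) (fun s : ℝ => s ^ α) :=
      Real.contDiff_rpow_const_of_le (by exact_mod_cast hα1)
    exact (h1.of_le le_rfl).comp hg
  have h2w : HasCompactSupport w :=
    h2g.comp_left (g := fun s : ℝ => s ^ α) (Real.zero_rpow hα0.ne')
  have hconj : Real.HolderConjugate (Module.finrank ℝ (EuclideanSpace ℝ (Fin n))) p := by
    rw [finrank_euclideanSpace_fin, Real.holderConjugate_iff]
    constructor
    · exact_mod_cast (show (1:ℕ) < n by omega)
    · rw [hpdef]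
      field_simp
      rw [hnRdef]; ring
  have hSob := lintegral_pow_le_pow_lintegral_fderiv
    (volume : Measure (EuclideanSpace ℝ (Fin n))) hw h2w hconj
  -- identify LHS of Sobolev with X
  have hLHS : ∫⁻ x, ‖w x‖ₑ ^ p = X := by
    apply lintegral_congr
    intro x
    show ‖w x‖ₑ ^ p = ENNReal.ofReal (g x ^ q)
    rw [show w x = g x ^ α from rfl]
    rw [Real.enorm_eq_ofReal (Real.rpow_nonneg (hg0 x) α)]
    rw [ENNReal.ofReal_rpow_of_nonneg (Real.rpow_nonneg (hg0 x) α) hp0.le]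
    rw [← Real.rpow_mul (hg0 x) α p, hαp]
  rw [hLHS] at hSob
  -- compute the derivative of w
  have hwD : ∀ x, fderiv ℝ w x = (α * g x ^ (α - 1)) • fderiv ℝ g x := by
    intro x
    have hd : HasFDerivAt g (fderiv ℝ g x) x := (hg.differentiable one_ne_zero x).hasFDerivAt
    have h := (Real.hasDerivAt_rpow_const (x := g x) (p := α)
      (Or.inr hα1)).comp_hasFDerivAt x hd
    exact h.fderiv
  have hwDn : ∀ x, (‖fderiv ℝ w x‖₊ : ℝ≥0∞) =
      ENNReal.ofReal α * (ENNReal.ofReal (g x ^ (α-1)) * ENNReal.ofReal ‖fderiv ℝ g x‖) := by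
    intro x
    rw [hwD x]
    have h1 : ‖(α * g x ^ (α - 1)) • fderiv ℝ g x‖ =
        α * (g x ^ (α-1) * ‖fderiv ℝ g x‖) := by
      rw [norm_smul, Real.norm_eq_abs, abs_mul,
        abs_of_nonneg hα0.le, abs_of_nonneg (Real.rpow_nonneg (hg0 x) _)]
      ring
    rw [← enorm_eq_nnnorm, ← ofReal_norm, h1]
    rw [ENNReal.ofReal_mul hα0.le,
      ENNReal.ofReal_mul (Real.rpow_nonneg (hg0 x) _)]
  -- Cauchy-Schwarz on the derivative integral
  set R : ℝ≥0∞ := ∫⁻ x, ENNReal.ofReal (g x ^ r) with hRdef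
  have hCS : ∫⁻ x, (‖fderiv ℝ w x‖₊ : ℝ≥0∞) ≤
      ENNReal.ofReal α * (R ^ (1/2:ℝ) * A ^ (1/2:ℝ)) := by
    have h1 : ∫⁻ x, (‖fderiv ℝ w x‖₊ : ℝ≥0∞) =
        ENNReal.ofReal α * ∫⁻ x,
          (ENNReal.ofReal (g x ^ (α-1)) * ENNReal.ofReal ‖fderiv ℝ g x‖) := by
      rw [← lintegral_const_mul' _ _ ENNReal.ofReal_ne_top]
      exact lintegral_congr hwDn
    rw [h1]
    apply mul_le_mul_right
    have hconj2 : Real.HolderConjugate 2 2 := Real.HolderConjugate.two_two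
    have hu : AEMeasurable (fun x => ENNReal.ofReal (g x ^ (α-1)))
        (volume : Measure (EuclideanSpace ℝ (Fin n))) := by
      apply Measurable.aemeasurable
      exact ENNReal.measurable_ofReal.comp
        (hgc.rpow_const (fun x => Or.inr (by linarith))).measurable
    have hv : AEMeasurable (fun x => ENNReal.ofReal ‖fderiv ℝ g x‖)
        (volume : Measure (EuclideanSpace ℝ (Fin n))) := by
      apply Measurable.aemeasurable
      exact ENNReal.measurable_ofReal.comp hfc.norm.measurable
    have h2 := ENNReal.lintegral_mul_le_Lp_mul_Lq
      (volume : Measure (EuclideanSpace ℝ (Fin n))) hconj2 hu hv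
    calc ∫⁻ x, (ENNReal.ofReal (g x ^ (α-1)) * ENNReal.ofReal ‖fderiv ℝ g x‖)
        ≤ (∫⁻ x, ENNReal.ofReal (g x ^ (α-1)) ^ (2:ℝ)) ^ (1/2:ℝ) *
          (∫⁻ x, ENNReal.ofReal ‖fderiv ℝ g x‖ ^ (2:ℝ)) ^ (1/2:ℝ) := h2
      _ = R ^ (1/2:ℝ) * A ^ (1/2:ℝ) := by
          congr 2
          · apply lintegral_congr
            intro x
            show ENNReal.ofReal (g x ^ (α-1)) ^ (2:ℝ) = ENNReal.ofReal (g x ^ r)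
            rw [ENNReal.ofReal_rpow_of_nonneg (Real.rpow_nonneg (hg0 x) _) (by norm_num)]
            rw [← Real.rpow_mul (hg0 x)]
            rw [show (α-1) * 2 = r by rw [hrdef]; ring]
          · apply lintegral_congr
            intro x
            show ENNReal.ofReal ‖fderiv ℝ g x‖ ^ (2:ℝ) = ENNReal.ofReal (‖fderiv ℝ g x‖^2)
            rw [ENNReal.ofReal_rpow_of_nonneg (norm_nonneg _) (by norm_num)]
            rw [show ‖fderiv ℝ g x‖ ^ (2:ℝ) = ‖fderiv ℝ g x‖ ^ (2:ℕ) by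
              rw [← Real.rpow_natCast ‖fderiv ℝ g x‖ 2]; norm_num]
  -- interpolation : R ≤ G^{2/nR} * X^{(nR-2)/nR}
  have hinterp : R ≤ G ^ (2/nR) * X ^ ((nR-2)/nR) := by
    have hexp2 : 0 ≤ q*(nR-2)/nR := div_nonneg (mul_nonneg hq0.le (by linarith)) hn0.le
    have hexp1 : (0:ℝ) ≤ 2/nR := by positivity
    have hrsum : r = 2/nR + q*(nR-2)/nR := by
      rw [hrdef, hαdef, hqdef]
      field_simp
      try ring
    have hF : ∀ x, ENNReal.ofReal (g x ^ r) =
        ENNReal.ofReal (g x) ^ (2/nR) * ENNReal.ofReal (g x) ^ (q*(nR-2)/nR) := by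
      intro x
      rw [← ENNReal.rpow_add_of_nonneg _ _ hexp1 hexp2]
      rw [ENNReal.ofReal_rpow_of_nonneg (hg0 x) (by linarith [add_nonneg hexp1 hexp2, hrsum] : 0 ≤ 2/nR + q*(nR-2)/nR)]
      rw [← hrsum]
    rcases eq_or_lt_of_le hn2 with hn2' | hn2'
    · -- n = 2 : r = 1 and the right factor is X^0 = 1
      have hr1 : r = 1 := by rw [hrdef, hαdef, hqdef, ← hn2']; norm_num
      have he : (nR - 2)/nR = 0 := by rw [← hn2']; norm_num
      have he2 : (2:ℝ)/nR = 1 := by rw [← hn2']; norm_num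
      rw [he, he2, ENNReal.rpow_zero, ENNReal.rpow_one, mul_one]
      rw [hRdef]
      apply le_of_eq
      apply lintegral_congr
      intro x
      rw [hr1, Real.rpow_one]
    · -- n ≥ 3 : genuine Hölder
      have hn3 : (3:ℝ) ≤ nR := by
        have h2n : (2:ℕ) < n := by
          have := hn2'
          rw [hnRdef] at this
          exact_mod_cast this
        rw [hnRdef]
        exact_mod_cast (show (3:ℕ) ≤ n by omega)
      have hne2 : nR - 2 ≠ 0 := by linarith
      have ha1 : 1 < nR/2 := by rw [lt_div_iff₀ (by norm_num : (0:ℝ) < 2)]; linarith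
      have hconj3 : Real.HolderConjugate (nR/2) (nR/(nR-2)) := by
        rw [Real.holderConjugate_iff]
        constructor
        · exact ha1
        · field_simp
          ring
      have hmeas : AEMeasurable (fun x => ENNReal.ofReal (g x))
          (volume : Measure (EuclideanSpace ℝ (Fin n))) :=
        (ENNReal.measurable_ofReal.comp hgc.measurable).aemeasurable
      have hu : AEMeasurable (fun x => ENNReal.ofReal (g x) ^ (2/nR))
          (volume : Measure (EuclideanSpace ℝ (Fin n))) :=
        hmeas.pow_const _
      have hv : AEMeasurable (fun x => ENNReal.ofReal (g x) ^ (q*(nR-2)/nR))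
          (volume : Measure (EuclideanSpace ℝ (Fin n))) :=
        hmeas.pow_const _
      have h2 := ENNReal.lintegral_mul_le_Lp_mul_Lq
        (volume : Measure (EuclideanSpace ℝ (Fin n))) hconj3 hu hv
      calc R = ∫⁻ x, (ENNReal.ofReal (g x) ^ (2/nR) * ENNReal.ofReal (g x) ^ (q*(nR-2)/nR)) := by
            rw [hRdef]; exact lintegral_congr hF
        _ ≤ (∫⁻ x, (ENNReal.ofReal (g x) ^ (2/nR)) ^ (nR/2)) ^ (1/(nR/2)) *
            (∫⁻ x, (ENNReal.ofReal (g x) ^ (q*(nR-2)/nR)) ^ (nR/(nR-2))) ^ (1/(nR/(nR-2))) := h2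
        _ = G ^ (2/nR) * X ^ ((nR-2)/nR) := by
            congr 1
            · rw [show (1/(nR/2)) = 2/nR by field_simp]
              congr 1
              apply lintegral_congr
              intro x
              rw [← ENNReal.rpow_mul]
              rw [show (2/nR) * (nR/2) = 1 by field_simp]
              exact ENNReal.rpow_one _
            · rw [show (1/(nR/(nR-2))) = (nR-2)/nR by field_simp]
              congr 1
              apply lintegral_congr
              intro x
              rw [← ENNReal.rpow_mul]
              rw [show (q*(nR-2)/nR) * (nR/(nR-2)) = q by field_simp]
              rw [ENNReal.ofReal_rpow_of_nonneg (hg0 x) hq0.le]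
  -- put the chain together
  have hTexp : ((G ^ (2/nR) * X ^ ((nR-2)/nR)) ^ (1/2:ℝ))
      = G ^ ((2/nR)*(1/2)) * X ^ (((nR-2)/nR)*(1/2)) := by
    simp only [ENNReal.mul_rpow_of_nonneg _ _ (show (0:ℝ) ≤ 1/2 by norm_num),
      ← ENNReal.rpow_mul]
  have hE : (ENNReal.ofReal α * (G ^ ((2/nR)*(1/2)) * X ^ (((nR-2)/nR)*(1/2)) * A ^ (1/2:ℝ))) ^ p
      = (ENNReal.ofReal α)^p *
        (G ^ ((2/nR)*(1/2)*p) * (X ^ (((nR-2)/nR)*(1/2)*p) * A ^ ((1/2)*p))) := by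
    simp only [ENNReal.mul_rpow_of_nonneg _ _ hp0.le, ← ENNReal.rpow_mul]
    ring
  have hexpG : (2/nR)*(1/2)*p = p/nR := by rw [hpdef]; field_simp; try ring
  have hexpX : ((nR-2)/nR)*(1/2)*p = β := by
    rw [hβdef, hpdef]; field_simp; try ring
  have hexpA : (1/2:ℝ)*p = p/2 := by ring
  have hchain : X ≤ ((C : ℝ≥0∞) * (ENNReal.ofReal α)^p * (G ^ (p/nR) * A ^ (p/2))) * X ^ β := by
    calc X ≤ C * (∫⁻ x, (‖fderiv ℝ w x‖₊ : ℝ≥0∞)) ^ p := hSob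
      _ ≤ C * (ENNReal.ofReal α * (R ^ (1/2:ℝ) * A ^ (1/2:ℝ))) ^ p := by
          apply mul_le_mul_right
          exact ENNReal.rpow_le_rpow hCS hp0.le
      _ ≤ C * (ENNReal.ofReal α * ((G ^ (2/nR) * X ^ ((nR-2)/nR)) ^ (1/2:ℝ) * A ^ (1/2:ℝ))) ^ p := by
          apply mul_le_mul_right
          apply ENNReal.rpow_le_rpow _ hp0.le
          apply mul_le_mul_right
          apply mul_le_mul_left
          exact ENNReal.rpow_le_rpow hinterp (by norm_num)
      _ = C * (ENNReal.ofReal α *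
            (G ^ ((2/nR)*(1/2)) * X ^ (((nR-2)/nR)*(1/2)) * A ^ (1/2:ℝ))) ^ p := by
          rw [hTexp]
      _ = C * ((ENNReal.ofReal α)^p *
            (G ^ (p/nR) * (X ^ β * A ^ (p/2)))) := by
          rw [hE, hexpG, hexpX, hexpA]
      _ = ((C : ℝ≥0∞) * (ENNReal.ofReal α)^p * (G ^ (p/nR) * A ^ (p/2))) * X ^ β := by
          ring
  have habs := ennreal_absorb hXt hβ0 hβ1 hchain
  -- simplify the exponent
  have hβγ : (1 - β) * γ = 1 := by
    rw [hβdef, hγdef]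
    field_simp
    try ring
  have hγeq : 1/(1-β) = γ := by
    have h1β : 1 - β ≠ 0 := by
      intro h0
      rw [sub_eq_zero] at h0
      rw [← h0] at hβ1
      exact lt_irrefl _ hβ1
    field_simp
    linarith [hβγ]
  rw [hγeq] at habs
  have hfinal : X ≤ K * (G ^ (2/nR) * A) := by
    have hK1 : (((C : ℝ≥0∞) * (ENNReal.ofReal α)^p * (G ^ (p/nR) * A ^ (p/2)))) ^ γ
        = ((C : ℝ≥0∞) * (ENNReal.ofReal α)^p) ^ γ *
          ((G ^ ((p/nR)*γ)) * (A ^ ((p/2)*γ))) := by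
      simp only [ENNReal.mul_rpow_of_nonneg _ _ hγ0, ← ENNReal.rpow_mul]
      try ring
    have hexpG2 : (p/nR)*γ = 2/nR := by rw [hpdef, hγdef]; field_simp; try ring
    have hexpA2 : (p/2)*γ = 1 := by rw [hpdef, hγdef]; field_simp; try ring
    calc X ≤ (((C : ℝ≥0∞) * (ENNReal.ofReal α)^p * (G ^ (p/nR) * A ^ (p/2)))) ^ γ := habs
      _ = K * (G ^ (2/nR) * A) := by
          rw [hK1, hexpG2, hexpA2, ENNReal.rpow_one, hKdef]
  -- back to real numbers
  have hRHSt : K * (G ^ (2/nR) * A) ≠ ⊤ := by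
    apply ENNReal.mul_ne_top hKt
    apply ENNReal.mul_ne_top _ hAt
    exact ENNReal.rpow_ne_top_of_nonneg (by positivity) hGt
  have htr := ENNReal.toReal_mono hRHSt hfinal
  have hXr : X.toReal = ∫ x, g x ^ q := by
    rw [← hXeq, ENNReal.toReal_ofReal (integral_nonneg (fun x => Real.rpow_nonneg (hg0 x) q))]
  have hGr : G.toReal = ∫ x, g x := by
    rw [← hGeq, ENNReal.toReal_ofReal (integral_nonneg hg0)]
  have hAr : A.toReal = ∫ x, ‖fderiv ℝ g x‖^2 := by
    rw [← hAeq, ENNReal.toReal_ofReal (integral_nonneg (fun x => sq_nonneg _))]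
  rw [hXr] at htr
  have hRHSr : (K * (G ^ (2/nR) * A)).toReal =
      K.toReal * ((∫ x, g x) ^ ((2:ℝ)/nR) * (∫ x, ‖fderiv ℝ g x‖^2)) := by
    calc (K * (G ^ (2/nR) * A)).toReal
        = K.toReal * ((G ^ (2/nR)).toReal * A.toReal) := by
          rw [ENNReal.toReal_mul, ENNReal.toReal_mul]
      _ = K.toReal * ((∫ x, g x) ^ ((2:ℝ)/nR) * (∫ x, ‖fderiv ℝ g x‖^2)) := by
          rw [hAr, ← hGr, ENNReal.toReal_rpow]
  rw [hRHSr] at htr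
  have hend : K.toReal * ((∫ x, g x) ^ ((2:ℝ)/nR) * (∫ x, ‖fderiv ℝ g x‖^2)) ≤
      (K.toReal + 1) * (∫ x, ‖fderiv ℝ g x‖^2) * (∫ x, g x) ^ ((2:ℝ)/nR) := by
    have h1 : 0 ≤ (∫ x, g x) ^ ((2:ℝ)/nR) := Real.rpow_nonneg (integral_nonneg hg0) _
    have h2 : 0 ≤ ∫ x, ‖fderiv ℝ g x‖^2 := integral_nonneg (fun x => sq_nonneg _)
    have h3 : 0 ≤ K.toReal := ENNReal.toReal_nonneg
    nlinarith [mul_nonneg h1 h2]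
  calc ∫ x, g x ^ q ≤ K.toReal * ((∫ x, g x) ^ ((2:ℝ)/nR) * (∫ x, ‖fderiv ℝ g x‖^2)) := htr
    _ ≤ (K.toReal + 1) * (∫ x, ‖fderiv ℝ g x‖^2) * (∫ x, g x) ^ ((2:ℝ)/nR) := hend

end CoreTwo
lemma coreGN (n : ℕ) (hn : 1 ≤ n) : ∃ B : ℝ, 0 < B ∧
    ∀ g : EuclideanSpace ℝ (Fin n) → ℝ, ContDiff ℝ 1 g → HasCompactSupport g →
      (∀ x, 0 ≤ g x) →
    ∫ x, (g x) ^ ((2:ℝ) + 2/n) ≤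
      B * (∫ x, ‖fderiv ℝ g x‖^2) * (∫ x, g x) ^ ((2:ℝ)/n) := by
  rcases eq_or_lt_of_le hn with h1 | h2
  · -- n = 1
    subst h1
    refine ⟨9, by norm_num, ?_⟩
    intro g hg h2g hg0
    have h := coreGN_one hg h2g hg0
    calc ∫ x, g x ^ ((2:ℝ) + 2/(1:ℕ)) = ∫ x, (g x)^(4:ℕ) := by
          apply integral_congr_ae
          filter_upwards with x
          rw [show ((2:ℝ) + 2/((1:ℕ):ℝ)) = ((4:ℕ):ℝ) by norm_num, Real.rpow_natCast]
      _ ≤ 9 * (∫ x, ‖fderiv ℝ g x‖^2) * (∫ x, g x)^(2:ℕ) := h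
      _ = 9 * (∫ x, ‖fderiv ℝ g x‖^2) * (∫ x, g x)^((2:ℝ)/(1:ℕ)) := by
          rw [show ((2:ℝ)/((1:ℕ):ℝ)) = ((2:ℕ):ℝ) by norm_num, Real.rpow_natCast]
  · exact coreGN_two (by omega)

set_option maxHeartbeats 1000000

/-- Modified Gagliardo–Nirenberg inequality on `ℝⁿ`: for every `ε > 0` there is `c_ε > 0`
such that for every `C¹` compactly supported `f : ℝⁿ → ℝ`,
`∫ |f|^{2+2/n} ≤ ε ‖f‖_{H¹}² (∫ |f||log|f||)^{2/n} + c * ∫ |f|`. -/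
theorem stmt_9 (n : ℕ) (hn : 1 ≤ n) (ε : ℝ) (hε : 0 < ε) :
    ∃ c : ℝ, 0 < c ∧
      ∀ f : EuclideanSpace ℝ (Fin n) → ℝ, ContDiff ℝ 1 f → HasCompactSupport f →
        (∫ x, |f x| ^ ((2 : ℝ) + 2 / n)) ≤
          ε * (∫ x, ((f x) ^ 2 + ‖fderiv ℝ f x‖ ^ 2)) *
              (∫ x, |f x| * abs (Real.log |f x|)) ^ ((2 : ℝ) / n)
            + c * ∫ x, |f x| := by
  obtain ⟨B, hB, hGN⟩ := coreGN n hn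
  have hn0 : (0:ℝ) < n := by exact_mod_cast hn
  set q : ℝ := 2 + 2/(n:ℝ) with hqdef
  have hq0 : 0 < q := by positivity
  have hq1 : 1 ≤ q - 1 := by
    have h1 : 0 < 2/(n:ℝ) := by positivity
    rw [hqdef]; linarith
  have h2q : (0:ℝ) < 2^q := Real.rpow_pos_of_pos (by norm_num) q
  set R : ℝ := max 1 ((16 * 2^q * B / ε) ^ ((n:ℝ)/2)) with hRdef
  have hR1 : 1 ≤ R := le_max_left _ _
  have hR0 : 0 < R := by linarith
  set M : ℝ := Real.exp R with hMdef
  have hM0 : 0 < M := Real.exp_pos R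
  have hlogM : Real.log M = R := Real.log_exp R
  -- the key smallness property of R
  have hRkey : 16 * 2^q * B * (1/R) ^ ((2:ℝ)/n) ≤ ε := by
    have hbase : (0:ℝ) ≤ 16 * 2^q * B / ε := by positivity
    have h1 : (16 * 2^q * B / ε) ^ ((n:ℝ)/2) ≤ R := le_max_right _ _
    have h2 : ((16 * 2^q * B / ε) ^ ((n:ℝ)/2)) ^ ((2:ℝ)/n) ≤ R ^ ((2:ℝ)/n) :=
      Real.rpow_le_rpow (Real.rpow_nonneg hbase _) h1 (by positivity)
    have h3 : ((16 * 2^q * B / ε) ^ ((n:ℝ)/2)) ^ ((2:ℝ)/n) = 16 * 2^q * B / ε := by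
      rw [← Real.rpow_mul hbase]
      rw [show ((n:ℝ)/2) * ((2:ℝ)/n) = 1 by field_simp]
      exact Real.rpow_one _
    rw [h3] at h2
    have h4 : (1/R) ^ ((2:ℝ)/n) = 1 / R ^ ((2:ℝ)/n) := by
      rw [one_div, one_div, ← Real.rpow_neg_one R, ← Real.rpow_mul hR0.le]
      rw [show (-1) * ((2:ℝ)/n) = ((2:ℝ)/n) * (-1) by ring]
      rw [Real.rpow_mul hR0.le, Real.rpow_neg_one]
    rw [h4]
    have hRn0 : 0 < R ^ ((2:ℝ)/n) := Real.rpow_pos_of_pos hR0 _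
    rw [mul_one_div, div_le_iff₀ hRn0]
    calc 16 * 2^q * B ≤ (16 * 2^q * B / ε) * ε := by
          rw [div_mul_cancel₀]; exact hε.ne'
      _ ≤ ε * R ^ ((2:ℝ)/n) := by
          rw [mul_comm]
          exact mul_le_mul_of_nonneg_left h2 hε.le
  refine ⟨(2*M)^(q-1) + 1, by positivity, ?_⟩
  intro f hf h2f
  set g : EuclideanSpace ℝ (Fin n) → ℝ := fun x => rho M (f x ^ 2) with hgdef
  have hg : ContDiff ℝ 1 g := contDiff_trunc hM0 hf
  have h2g : HasCompactSupport g := hasCompactSupport_trunc hM0 h2f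
  have hg0 : ∀ x, 0 ≤ g x := fun x => rho_nonneg M (f x ^ 2)
  have hfc : Continuous f := hf.continuous
  -- pointwise split
  have hsplit : ∀ x, |f x| ^ q ≤ (2*M)^(q-1) * |f x| + 2^q * (g x)^q := by
    intro x
    have hgqx : (0:ℝ) ≤ 2^q * (g x)^q :=
      mul_nonneg h2q.le (Real.rpow_nonneg (hg0 x) q)
    rcases le_or_gt (|f x|) (2*M) with hle | hlt
    · have h1 : |f x| ^ q = |f x| ^ (q-1) * |f x| := by
        rcases eq_or_lt_of_le (abs_nonneg (f x)) with h0 | h0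
        · rw [← h0, Real.zero_rpow hq0.ne', Real.zero_rpow (by linarith : q-1 ≠ 0)]
          ring
        · have h := Real.rpow_add_one h0.ne' (q-1)
          rw [show q-1+1 = q by ring] at h
          exact h
      rw [h1]
      have h2 : |f x| ^ (q-1) ≤ (2*M)^(q-1) :=
        Real.rpow_le_rpow (abs_nonneg _) hle (by linarith)
      have h3 : |f x| ^ (q-1) * |f x| ≤ (2*M)^(q-1) * |f x| :=
        mul_le_mul_of_nonneg_right h2 (abs_nonneg _)
      linarith
    · have h2gx : |f x| ≤ 2 * g x := abs_le_two_mul_rho hM0 hlt.le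
      have h4 : (0:ℝ) ≤ (2*M)^(q-1) * |f x| := by positivity
      calc |f x| ^ q ≤ (2 * g x) ^ q :=
            Real.rpow_le_rpow (abs_nonneg _) h2gx hq0.le
        _ = 2^q * (g x)^q := Real.mul_rpow (by norm_num) (hg0 x)
        _ ≤ (2*M)^(q-1) * |f x| + 2^q * (g x)^q := by linarith
  -- integrability
  have habs : Integrable (fun x => |f x|) :=
    hfc.abs.integrable_of_hasCompactSupport h2f.abs
  have hfq : Integrable (fun x => |f x| ^ q) := by
    apply (hfc.abs.rpow_const (fun x => Or.inr hq0.le)).integrable_of_hasCompactSupport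
    apply (h2f.abs).comp_left (g := fun s : ℝ => s ^ q)
    exact Real.zero_rpow hq0.ne'
  have hgq : Integrable (fun x => (g x) ^ q) := by
    apply (hg.continuous.rpow_const (fun x => Or.inr hq0.le)).integrable_of_hasCompactSupport
    apply h2g.comp_left (g := fun s : ℝ => s ^ q)
    exact Real.zero_rpow hq0.ne'
  have hgint : Integrable g := hg.continuous.integrable_of_hasCompactSupport h2g
  have hLcont : Continuous (fun x => |f x| * |Real.log (|f x|)|) := by
    have h1 : Continuous (fun x => |(|f x|) * Real.log (|f x|)|) :=
      (Real.continuous_mul_log.comp hfc.abs).abs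
    have h2 : (fun x => |(|f x|) * Real.log (|f x|)|)
        = fun x => |f x| * |Real.log (|f x|)| := by
      funext x
      rw [abs_mul, abs_abs]
    rw [h2] at h1
    exact h1
  have hLint : Integrable (fun x => |f x| * |Real.log (|f x|)|) := by
    apply hLcont.integrable_of_hasCompactSupport
    apply h2f.comp_left (g := fun t : ℝ => |t| * |Real.log (|t|)|)
    simp
  have hAint : Integrable (fun x => (f x)^2 + ‖fderiv ℝ f x‖^2) := by
    apply Integrable.add
    · apply (hfc.fun_pow 2).integrable_of_hasCompactSupport
      exact h2f.comp_left (g := fun s : ℝ => s^2) (by simp)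
    · apply ((hf.continuous_fderiv one_ne_zero).norm.fun_pow 2).integrable_of_hasCompactSupport
      exact (h2f.fderiv (𝕜 := ℝ)).comp_left
        (g := fun L : (EuclideanSpace ℝ (Fin n)) →L[ℝ] ℝ => ‖L‖^2) (by simp)
  have hd2g : Integrable (fun x => ‖fderiv ℝ g x‖^2) := by
    apply ((hg.continuous_fderiv one_ne_zero).norm.fun_pow 2).integrable_of_hasCompactSupport
    exact (h2g.fderiv (𝕜 := ℝ)).comp_left
      (g := fun L : (EuclideanSpace ℝ (Fin n)) →L[ℝ] ℝ => ‖L‖^2) (by simp)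
  -- nonnegative quantities
  set I : ℝ := ∫ x, |f x| with hIdef
  set A : ℝ := ∫ x, ((f x)^2 + ‖fderiv ℝ f x‖^2) with hAdef
  set L : ℝ := ∫ x, |f x| * |Real.log (|f x|)| with hLdef
  have hI0 : 0 ≤ I := integral_nonneg (fun x => abs_nonneg _)
  have hA0 : 0 ≤ A := integral_nonneg (fun x => by positivity)
  have hL0 : 0 ≤ L := integral_nonneg (fun x => by positivity)
  -- step B : integral split
  have hstepB : ∫ x, |f x| ^ q ≤ (2*M)^(q-1) * I + 2^q * ∫ x, (g x)^q := by
    calc ∫ x, |f x| ^ q ≤ ∫ x, ((2*M)^(q-1) * |f x| + 2^q * (g x)^q) := by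
          apply integral_mono hfq ((habs.const_mul _).add (hgq.const_mul _)) hsplit
      _ = (2*M)^(q-1) * I + 2^q * ∫ x, (g x)^q := by
          rw [integral_add (habs.const_mul _) (hgq.const_mul _),
            integral_const_mul, integral_const_mul]
  -- step D : derivative comparison
  have hstepD : (∫ x, ‖fderiv ℝ g x‖^2) ≤ 16 * A := by
    calc (∫ x, ‖fderiv ℝ g x‖^2) ≤ ∫ x, 16 * ((f x)^2 + ‖fderiv ℝ f x‖^2) := by
          apply integral_mono hd2g (hAint.const_mul _)
          intro x
          show ‖fderiv ℝ g x‖^2 ≤ 16 * ((f x)^2 + ‖fderiv ℝ f x‖^2)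
          have h1 := norm_fderiv_trunc_le hM0 hf x
          have h2 : ‖fderiv ℝ g x‖^2 ≤ (4 * ‖fderiv ℝ f x‖)^2 :=
            pow_le_pow_left₀ (norm_nonneg _) h1 2
          have h3 : (0:ℝ) ≤ (f x)^2 := sq_nonneg _
          have h4 : (4 * ‖fderiv ℝ f x‖)^2 = 16 * ‖fderiv ℝ f x‖^2 := by ring
          linarith
      _ = 16 * A := integral_const_mul _ _
  -- step E : L¹ comparison with L log L
  have hstepE : (∫ x, g x) ≤ (1/R) * L := by
    calc (∫ x, g x) ≤ ∫ x, (1/R) * (|f x| * |Real.log (|f x|)|) := by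
          apply integral_mono hgint (hLint.const_mul _)
          intro x
          show g x ≤ (1/R) * (|f x| * |Real.log (|f x|)|)
          rcases le_or_gt (|f x|) M with hle | hlt
          · rw [show g x = 0 from rho_eq_zero_of_abs_le hle]
            exact mul_nonneg (one_div_nonneg.mpr hR0.le)
              (mul_nonneg (abs_nonneg _) (abs_nonneg _))
          · have hlog : R ≤ Real.log (|f x|) := by
              rw [← hlogM]
              exact Real.log_le_log hM0 hlt.le
            have hlogpos : 0 < Real.log (|f x|) := by linarith
            rw [abs_of_pos hlogpos]
            have h1 : g x ≤ |f x| := rho_le_abs hM0 (f x)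
            have h2 : |f x| * R ≤ |f x| * Real.log (|f x|) :=
              mul_le_mul_of_nonneg_left hlog (abs_nonneg _)
            rw [show (1/R) * (|f x| * Real.log (|f x|)) = (|f x| * Real.log (|f x|))/R by ring]
            rw [le_div_iff₀ hR0]
            calc g x * R ≤ |f x| * R := mul_le_mul_of_nonneg_right h1 hR0.le
              _ ≤ |f x| * Real.log (|f x|) := h2
      _ = (1/R) * L := integral_const_mul _ _
  -- apply core GN to g
  have hcore := hGN g hg h2g hg0
  -- assemble
  have hg1 : (∫ x, (g x)^q) ≤ B * (16 * A) * ((1/R) * L) ^ ((2:ℝ)/n) := by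
    calc (∫ x, (g x)^q) ≤ B * (∫ x, ‖fderiv ℝ g x‖^2) * (∫ x, g x) ^ ((2:ℝ)/n) := hcore
      _ ≤ B * (16 * A) * ((1/R) * L) ^ ((2:ℝ)/n) := by
          apply mul_le_mul
          · exact mul_le_mul_of_nonneg_left hstepD hB.le
          · apply Real.rpow_le_rpow (integral_nonneg hg0) hstepE (by positivity)
          · exact Real.rpow_nonneg (integral_nonneg hg0) _
          · positivity
  have hg2 : 2^q * (∫ x, (g x)^q) ≤ ε * A * L ^ ((2:ℝ)/n) := by
    have h1 : ((1/R) * L) ^ ((2:ℝ)/n) = (1/R) ^ ((2:ℝ)/n) * L ^ ((2:ℝ)/n) :=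
      Real.mul_rpow (by positivity) hL0
    calc 2^q * (∫ x, (g x)^q) ≤ 2^q * (B * (16 * A) * ((1/R) * L) ^ ((2:ℝ)/n)) :=
          mul_le_mul_of_nonneg_left hg1 h2q.le
      _ = (16 * 2^q * B * (1/R) ^ ((2:ℝ)/n)) * A * L ^ ((2:ℝ)/n) := by
          rw [h1]; ring
      _ ≤ ε * A * L ^ ((2:ℝ)/n) := by
          have hLn : 0 ≤ L ^ ((2:ℝ)/n) := Real.rpow_nonneg hL0 _
          apply mul_le_mul_of_nonneg_right _ hLn
          exact mul_le_mul_of_nonneg_right hRkey hA0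
  calc ∫ x, |f x| ^ q ≤ (2*M)^(q-1) * I + 2^q * ∫ x, (g x)^q := hstepB
    _ ≤ (2*M)^(q-1) * I + ε * A * L ^ ((2:ℝ)/n) := by linarith
    _ ≤ ε * A * L ^ ((2:ℝ)/n) + ((2*M)^(q-1) + 1) * I := by nlinarith [hI0]
end

section
/- For every L>0 and every ε>0 there exists a constant c_ε>0 (depending only on L and ε) such that for every continuously differentiable function f : [0,L] → ℝ: ∫₀ᴸ f(x)⁴ dx ≤ ε (∫₀ᴸ (f(x)² + f′(x)²) dx) (∫₀ᴸ |f(x)|·|log|f(x)|| dx)² + c_ε ∫₀ᴸ |f(x)| dx, where |f||log|f|| is interpreted as 0 at points where f=0. -/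
open MeasureTheory intervalIntegral

private lemma gn_pick (L x₀ t : ℝ) (hx₀ : x₀ ∈ Set.Icc 0 L) (ht : 0 < t) (htL : t ≤ L / 2) :
    ∃ a b : ℝ, 0 ≤ a ∧ a ≤ b ∧ b ≤ L ∧ b - a = t ∧ ∀ x ∈ Set.Icc a b, |x - x₀| ≤ t := by
  rcases le_or_gt x₀ (L / 2) with h | h
  · exact ⟨x₀, x₀ + t, hx₀.1, by linarith, by linarith, by ring,
      fun x hx => abs_le.2 ⟨by linarith [hx.1], by linarith [hx.2]⟩⟩
  · exact ⟨x₀ - t, x₀, by linarith [hx₀.2], by linarith, hx₀.2, by ring,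
      fun x hx => abs_le.2 ⟨by linarith [hx.1], by linarith [hx.2]⟩⟩

private lemma gn_mono {u v : ℝ} (hu : 1 ≤ u) (huv : u ≤ v) :
    u * Real.log u ≤ v * Real.log v :=
  mul_le_mul huv (Real.log_le_log (by linarith) huv) (Real.log_nonneg hu) (by linarith)

private lemma gn_abs4 (t : ℝ) : t ^ 4 = |t| ^ 3 * |t| := by
  have h : |t| ^ 4 = t ^ 4 := by
    rw [← abs_pow]; exact abs_of_nonneg (by positivity)
  rw [← h]; ring

private lemma gn_split (M S t : ℝ) (hMpos : 0 < M) (hM : 1 ≤ Real.log M) (hS : |t| ≤ S) :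
    t ^ 4 ≤ M ^ 3 * |t| + S ^ 3 / Real.log M * (|t| * abs (Real.log |t|)) := by
  have hM0 : 0 < Real.log M := by linarith
  have ht0 : 0 ≤ |t| := abs_nonneg t
  have hS0 : 0 ≤ S := le_trans ht0 hS
  rcases le_or_gt (|t|) M with h | h
  · have h1 : |t| ^ 3 * |t| ≤ M ^ 3 * |t| :=
      mul_le_mul_of_nonneg_right (pow_le_pow_left₀ ht0 h 3) ht0
    have h2 : 0 ≤ S ^ 3 / Real.log M * (|t| * abs (Real.log |t|)) := by positivity
    rw [gn_abs4]; linarith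
  · have hlt : Real.log M ≤ Real.log |t| := Real.log_le_log hMpos h.le
    have hlog0 : 0 ≤ Real.log |t| := by linarith
    have habslog : abs (Real.log |t|) = Real.log |t| := abs_of_nonneg hlog0
    have h1 : |t| ^ 3 * |t| ≤ S ^ 3 * |t| :=
      mul_le_mul_of_nonneg_right (pow_le_pow_left₀ ht0 hS 3) ht0
    have h2 : S ^ 3 * |t| ≤ S ^ 3 / Real.log M * (|t| * abs (Real.log |t|)) := by
      rw [habslog, div_mul_eq_mul_div, le_div_iff₀ hM0]
      have := mul_le_mul_of_nonneg_left hlt (by positivity : (0:ℝ) ≤ S ^ 3 * |t|)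
      linarith
    have h3 : 0 ≤ M ^ 3 * |t| := by positivity
    rw [gn_abs4]; linarith

set_option maxHeartbeats 1000000 in
/-- One-dimensional modified Gagliardo–Nirenberg inequality: for every `ε > 0` there is
`c_ε > 0` such that for every `C¹` function `f : [0,L] → ℝ`,
`∫₀ᴸ f⁴ ≤ ε (∫₀ᴸ (f² + f′²)) (∫₀ᴸ |f||log|f||)² + c_ε ∫₀ᴸ |f|`. -/
theorem stmt_10 (L : ℝ) (hL : 0 < L) (ε : ℝ) (hε : 0 < ε) :
    ∃ c : ℝ, 0 < c ∧
      ∀ f : ℝ → ℝ, ContDiffOn ℝ 1 f (Set.Icc 0 L) →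
        (∫ x in (0:ℝ)..L, (f x) ^ 4) ≤
          ε * (∫ x in (0:ℝ)..L, ((f x) ^ 2 + (deriv f x) ^ 2)) *
              (∫ x in (0:ℝ)..L, |f x| * abs (Real.log |f x|)) ^ 2
            + c * ∫ x in (0:ℝ)..L, |f x| := by
  have hL2 : (0:ℝ) ≤ L := hL.le
  set M : ℝ := Real.exp (1 + 16 / ε) with hM_def
  set S₀ : ℝ := 2 * Real.exp (1 + 16 / (ε * L ^ 2)) with hS₀_def
  have hMpos : 0 < M := Real.exp_pos _
  have hS₀pos : 0 < S₀ := by positivity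
  have hlogM : Real.log M = 1 + 16 / ε := Real.log_exp _
  have hlogM1 : 1 ≤ Real.log M := by
    rw [hlogM]; have : 0 ≤ 16 / ε := by positivity
    linarith
  refine ⟨M ^ 3 + S₀ ^ 3, by positivity, ?_⟩
  intro f hf
  set I : Set ℝ := Set.Icc 0 L with hI_def
  have hfc : ContinuousOn f I := hf.continuousOn
  have hder : ∀ x ∈ Set.Ioo (0:ℝ) L, HasDerivAt f (deriv f x) x := by
    intro x hx
    have h1 : DifferentiableWithinAt ℝ f I x :=
      (hf.differentiableOn one_ne_zero) x (Set.Ioo_subset_Icc_self hx)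
    exact (h1.differentiableAt (Icc_mem_nhds hx.1 hx.2)).hasDerivAt
  have hdw : ContinuousOn (derivWithin f I) I :=
    hf.continuousOn_derivWithin (uniqueDiffOn_Icc hL) le_rfl
  have hdeq : ∀ x ∈ Set.Ioo (0:ℝ) L, deriv f x = derivWithin f I x := fun x hx =>
    (derivWithin_of_mem_nhds (Icc_mem_nhds hx.1 hx.2)).symm
  -- integrability of continuous functions
  have hci : ∀ g : ℝ → ℝ, ContinuousOn g I → IntervalIntegrable g volume 0 L := by
    intro g hg
    rw [intervalIntegrable_iff_integrableOn_Icc_of_le hL2]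
    exact hg.integrableOn_compact isCompact_Icc
  -- integrability transfer along equality on the open interval
  have hcongr : ∀ g₁ g₂ : ℝ → ℝ, (∀ x ∈ Set.Ioo (0:ℝ) L, g₁ x = g₂ x) →
      IntervalIntegrable g₁ volume 0 L → IntervalIntegrable g₂ volume 0 L := by
    intro g₁ g₂ h hg
    rw [intervalIntegrable_iff_integrableOn_Ioo_of_le hL2] at hg ⊢
    exact hg.congr ((ae_restrict_iff' measurableSet_Ioo).2 (ae_of_all _ h))
  have hi_f2 : IntervalIntegrable (fun x => f x ^ 2) volume 0 L := hci _ (hfc.pow 2)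
  have hi_f4 : IntervalIntegrable (fun x => f x ^ 4) volume 0 L := hci _ (hfc.pow 4)
  have hi_absf : IntervalIntegrable (fun x => |f x|) volume 0 L := hci _ hfc.abs
  have hAcont : ContinuousOn (fun x => |f x| * abs (Real.log |f x|)) I := by
    have h1 : Continuous fun t : ℝ => abs (|t| * Real.log |t|) :=
      continuous_abs.comp (Real.continuous_mul_log.comp continuous_abs)
    have h2 : (fun x => |f x| * abs (Real.log |f x|)) = (fun t : ℝ => abs (|t| * Real.log |t|)) ∘ f := by
      funext x; simp [Function.comp, abs_mul, abs_abs]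
    rw [h2]; exact h1.comp_continuousOn hfc
  have hi_A : IntervalIntegrable (fun x => |f x| * abs (Real.log |f x|)) volume 0 L := hci _ hAcont
  have hi_d2 : IntervalIntegrable (fun x => (deriv f x) ^ 2) volume 0 L :=
    hcongr _ _ (fun x hx => by rw [hdeq x hx]; rfl) (hci _ (hdw.pow 2))
  have hi_ff' : IntervalIntegrable (fun x => 2 * f x * deriv f x) volume 0 L :=
    hcongr (fun x => 2 * f x * derivWithin f I x) _ (fun x hx => by rw [hdeq x hx])
      (hci _ ((continuousOn_const.mul hfc).mul hdw))
  set N := ∫ x in (0:ℝ)..L, |f x| with hN_def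
  set A := ∫ x in (0:ℝ)..L, |f x| * abs (Real.log |f x|) with hA_def
  set Hd := ∫ x in (0:ℝ)..L, (deriv f x) ^ 2 with hHd_def
  set H2 := ∫ x in (0:ℝ)..L, (f x) ^ 2 with hH2_def
  set H := ∫ x in (0:ℝ)..L, ((f x) ^ 2 + (deriv f x) ^ 2) with hH_def
  have hHsplit : H = H2 + Hd := intervalIntegral.integral_add hi_f2 hi_d2
  have hN0 : 0 ≤ N := intervalIntegral.integral_nonneg hL2 fun x _ => abs_nonneg _
  have hA0 : 0 ≤ A := intervalIntegral.integral_nonneg hL2 fun x _ => by positivity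
  have hHd0 : 0 ≤ Hd := intervalIntegral.integral_nonneg hL2 fun x _ => sq_nonneg _
  have hH20 : 0 ≤ H2 := intervalIntegral.integral_nonneg hL2 fun x _ => sq_nonneg _
  have hH0 : 0 ≤ H := by rw [hHsplit]; linarith
  have hHdH : Hd ≤ H := by rw [hHsplit]; linarith
  have hH2H : H2 ≤ H := by rw [hHsplit]; linarith
  -- maximum point
  obtain ⟨x₀, hx₀I, hmax⟩ := isCompact_Icc.exists_isMaxOn (Set.nonempty_Icc.2 hL2)
    (continuous_abs.comp_continuousOn hfc)
  set S := |f x₀| with hS_def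
  have hS0 : 0 ≤ S := abs_nonneg _
  have hmax' : ∀ x ∈ I, |f x| ≤ S := fun x hx => hmax hx
  -- FTC-based claim
  have claimB : ∀ a b : ℝ, a ∈ I → b ∈ I → a ≤ b → ∀ δ : ℝ, 0 < δ →
      |f b ^ 2 - f a ^ 2| ≤ S * δ * (b - a) + S / δ * Hd := by
    intro a b ha hb hab δ hδ
    have hIoo : Set.Ioo a b ⊆ Set.Ioo 0 L := fun y hy =>
      ⟨lt_of_le_of_lt ha.1 hy.1, lt_of_lt_of_le hy.2 hb.2⟩
    have hIccsub : Set.Icc a b ⊆ I := Set.Icc_subset_Icc ha.1 hb.2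
    have hsub : Set.uIcc a b ⊆ Set.uIcc (0:ℝ) L := by
      rw [Set.uIcc_of_le hab, Set.uIcc_of_le hL2]; exact hIccsub
    have hint : IntervalIntegrable (fun y => 2 * f y * deriv f y) volume a b :=
      hi_ff'.mono_set hsub
    have hintd2 : IntervalIntegrable (fun y => (deriv f y) ^ 2) volume a b :=
      hi_d2.mono_set hsub
    have hftc : ∫ y in a..b, 2 * f y * deriv f y = f b ^ 2 - f a ^ 2 := by
      refine intervalIntegral.integral_eq_sub_of_hasDerivAt_of_le hab
        ((hfc.mono hIccsub).pow 2) (fun y hy => ?_) hint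
      simpa using (hder y (hIoo hy)).pow 2
    have hbound : ∀ y ∈ Set.Icc a b,
        |2 * f y * deriv f y| ≤ S * δ + S / δ * (deriv f y) ^ 2 := by
      intro y hy
      have h1 : |f y| ≤ S := hmax' y (hIccsub hy)
      have h2 : |2 * f y * deriv f y| = 2 * |f y| * |deriv f y| := by
        rw [abs_mul, abs_mul]; norm_num
      have h3 : (deriv f y) ^ 2 = |deriv f y| ^ 2 := (sq_abs _).symm
      have h4 : 0 ≤ |deriv f y| := abs_nonneg _
      have expand : S * δ + S / δ * |deriv f y| ^ 2 = S * (δ * δ + |deriv f y| ^ 2) / δ := by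
        field_simp
      rw [h2, h3, expand, le_div_iff₀ hδ]
      have key : 2 * |deriv f y| * δ ≤ δ * δ + |deriv f y| ^ 2 := by
        nlinarith [sq_nonneg (δ - |deriv f y|)]
      have k1 := mul_le_mul_of_nonneg_left key hS0
      have k2 := mul_le_mul_of_nonneg_right h1 (by positivity : (0:ℝ) ≤ 2 * |deriv f y| * δ)
      linarith [k1, k2]
    have hint2 : IntervalIntegrable (fun y => S * δ + S / δ * (deriv f y) ^ 2) volume a b :=
      intervalIntegrable_const.add (hintd2.const_mul _)
    calc |f b ^ 2 - f a ^ 2| = |∫ y in a..b, 2 * f y * deriv f y| := by rw [hftc]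
      _ ≤ ∫ y in a..b, |2 * f y * deriv f y| :=
          intervalIntegral.abs_integral_le_integral_abs hab
      _ ≤ ∫ y in a..b, (S * δ + S / δ * (deriv f y) ^ 2) :=
          intervalIntegral.integral_mono_on hab hint.abs hint2 hbound
      _ = S * δ * (b - a) + S / δ * ∫ y in a..b, (deriv f y) ^ 2 := by
          rw [intervalIntegral.integral_add intervalIntegrable_const (hintd2.const_mul _),
            intervalIntegral.integral_const, intervalIntegral.integral_const_mul]
          simp [smul_eq_mul]; ring
      _ ≤ S * δ * (b - a) + S / δ * Hd := by
          have hmono : (∫ y in a..b, (deriv f y) ^ 2) ≤ Hd :=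
            intervalIntegral.integral_mono_interval ha.1 hab hb.2
              (ae_of_all _ fun y => sq_nonneg _) hi_d2
          have hSδ : 0 ≤ S / δ := by positivity
          have := mul_le_mul_of_nonneg_left hmono hSδ
          linarith
  have claimA : ∀ x ∈ I, ∀ δ : ℝ, 0 < δ →
      f x₀ ^ 2 - f x ^ 2 ≤ S * δ * |x - x₀| + S / δ * Hd := by
    intro x hx δ hδ
    rcases le_total x x₀ with h | h
    · have hcb := claimB x x₀ hx hx₀I h δ hδ
      have habs : |x - x₀| = x₀ - x := by
        rw [abs_sub_comm]; exact abs_of_nonneg (by linarith)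
      rw [habs]
      calc f x₀ ^ 2 - f x ^ 2 ≤ |f x₀ ^ 2 - f x ^ 2| := le_abs_self _
        _ ≤ S * δ * (x₀ - x) + S / δ * Hd := hcb
    · have hcb := claimB x₀ x hx₀I hx h δ hδ
      have habs : |x - x₀| = x - x₀ := abs_of_nonneg (by linarith)
      rw [habs]
      calc f x₀ ^ 2 - f x ^ 2 ≤ |f x ^ 2 - f x₀ ^ 2| := by
            rw [abs_sub_comm]; exact le_abs_self _
        _ ≤ S * δ * (x - x₀) + S / δ * Hd := hcb
  -- positivity of H2 when S > 0
  have hH2pos : 0 < S → 0 < H2 := by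
    intro hSpos
    have hval : f x₀ ^ 2 = S ^ 2 := (sq_abs _).symm
    have hlt : S ^ 2 / 2 < f x₀ ^ 2 := by
      rw [hval]; have := mul_pos hSpos hSpos
      nlinarith [mul_pos hSpos hSpos]
    have hc2 : ContinuousWithinAt (fun x => f x ^ 2) I x₀ := (hfc.pow 2) x₀ hx₀I
    have hev : ∀ᶠ x in nhdsWithin x₀ I, S ^ 2 / 2 < f x ^ 2 :=
      hc2.eventually (eventually_gt_nhds hlt)
    obtain ⟨η, hη, hball⟩ := Metric.mem_nhdsWithin_iff.1 hev
    set t := min (η / 2) (L / 2) with ht_def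
    have ht : 0 < t := lt_min (by linarith) (by linarith)
    have htL : t ≤ L / 2 := min_le_right _ _
    obtain ⟨a, b, ha0, hab, hbL, hba, hclose⟩ := gn_pick L x₀ t hx₀I ht htL
    have hlow : ∀ x ∈ Set.Icc a b, S ^ 2 / 2 ≤ f x ^ 2 := by
      intro x hx
      have hxI : x ∈ I := ⟨by linarith [hx.1], by linarith [hx.2]⟩
      have hdist : dist x x₀ < η := by
        rw [Real.dist_eq]
        have := hclose x hx
        have h2 : t ≤ η / 2 := min_le_left _ _
        linarith
      exact (hball ⟨Metric.mem_ball.2 hdist, hxI⟩).le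
    have h1 : (b - a) * (S ^ 2 / 2) ≤ ∫ x in a..b, f x ^ 2 := by
      have := intervalIntegral.integral_mono_on hab intervalIntegrable_const
        (hi_f2.mono_set (by rw [Set.uIcc_of_le hab, Set.uIcc_of_le hL2]; exact Set.Icc_subset_Icc ha0 hbL)) hlow
      rwa [intervalIntegral.integral_const, smul_eq_mul] at this
    have h2 : (∫ x in a..b, f x ^ 2) ≤ H2 :=
      intervalIntegral.integral_mono_interval ha0 hab hbL
        (ae_of_all _ fun y => sq_nonneg _) hi_f2
    have h3 : 0 < (b - a) * (S ^ 2 / 2) := by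
      rw [hba]; positivity
    linarith
  -- main case split
  rcases lt_or_ge S S₀ with hSsmall | hSbig
  · -- small maximum: f⁴ ≤ S₀³ |f|
    have hpt : ∀ x ∈ Set.Icc (0:ℝ) L, f x ^ 4 ≤ S₀ ^ 3 * |f x| := by
      intro x hx
      have h1 : |f x| ≤ S₀ := le_trans (hmax' x hx) hSsmall.le
      rw [gn_abs4]
      exact mul_le_mul_of_nonneg_right (pow_le_pow_left₀ (abs_nonneg _) h1 3) (abs_nonneg _)
    have hint : (∫ x in (0:ℝ)..L, f x ^ 4) ≤ S₀ ^ 3 * N := by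
      calc (∫ x in (0:ℝ)..L, f x ^ 4) ≤ ∫ x in (0:ℝ)..L, S₀ ^ 3 * |f x| :=
            intervalIntegral.integral_mono_on hL2 hi_f4 (hi_absf.const_mul _) hpt
        _ = S₀ ^ 3 * N := intervalIntegral.integral_const_mul _ _
    have h1 : 0 ≤ ε * H * A ^ 2 := by positivity
    have h2 : (M ^ 3 + S₀ ^ 3) * N = M ^ 3 * N + S₀ ^ 3 * N := by ring
    have h3 : 0 ≤ M ^ 3 * N := mul_nonneg (pow_nonneg hMpos.le 3) hN0
    have h4 : 0 ≤ S₀ ^ 3 * N := mul_nonneg (pow_nonneg hS₀pos.le 3) hN0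
    linarith
  · -- large maximum
    have hSpos : 0 < S := lt_of_lt_of_le hS₀pos hSbig
    have hH2p : 0 < H2 := hH2pos hSpos
    have hHpos : 0 < H := by rw [hHsplit]; linarith
    have hS2 : Real.exp (1 + 16 / (ε * L ^ 2)) ≤ S / 2 := by
      rw [hS₀_def] at hSbig; linarith
    have hlogS : 1 + 16 / (ε * L ^ 2) ≤ Real.log (S / 2) := by
      have h := Real.log_le_log (Real.exp_pos _) hS2
      rwa [Real.log_exp] at h
    have hy0 : 0 ≤ 16 / (ε * L ^ 2) := by positivity
    have hlogS1 : 1 ≤ Real.log (S / 2) := by linarith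
    have hShalf1 : 1 ≤ S / 2 := le_trans (Real.one_le_exp (by positivity)) hS2
    set ρ := min (L / 2) (S ^ 2 / (8 * H)) with hρ_def
    have hρpos : 0 < ρ := lt_min (by linarith) (div_pos (pow_pos hSpos 2) (by linarith))
    have hρL : ρ ≤ L / 2 := min_le_left _ _
    have hρH : ρ ≤ S ^ 2 / (8 * H) := min_le_right _ _
    have hJ : ∀ x ∈ I, |x - x₀| ≤ ρ → S ^ 2 / 4 ≤ f x ^ 2 := by
      intro x hx hxd
      by_contra hcon
      push_neg at hcon
      have hδ : 0 < 4 * H / S := div_pos (by linarith) hSpos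
      have hclaim := claimA x hx (4 * H / S) hδ
      have hval : f x₀ ^ 2 = S ^ 2 := (sq_abs _).symm
      have e1 : S * (4 * H / S) * |x - x₀| = 4 * H * |x - x₀| := by field_simp
      have e2 : S / (4 * H / S) * Hd = S ^ 2 * Hd / (4 * H) := by
        rw [div_div_eq_mul_div]; ring
      have e3 : S ^ 2 * Hd / (4 * H) ≤ S ^ 2 / 4 := by
        rw [div_le_div_iff₀ (by linarith) (by norm_num)]
        have := mul_le_mul_of_nonneg_left hHdH (sq_nonneg S)
        linarith
      have e4 : 4 * H * |x - x₀| ≤ 4 * H * ρ := by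
        have := mul_le_mul_of_nonneg_left hxd (by linarith : (0:ℝ) ≤ 4 * H); linarith
      have e5 : 4 * H * ρ ≤ 4 * H * (S ^ 2 / (8 * H)) := by
        have := mul_le_mul_of_nonneg_left hρH (by linarith : (0:ℝ) ≤ 4 * H); linarith
      have e6 : 4 * H * (S ^ 2 / (8 * H)) = S ^ 2 / 2 := by field_simp; ring
      rw [hval, e1, e2] at hclaim
      linarith
    obtain ⟨a, b, ha0, hab, hbL, hba, hclose⟩ := gn_pick L x₀ ρ hx₀I hρpos hρL
    have hAlow : ρ * (S / 2 * Real.log (S / 2)) ≤ A := by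
      have hlow : ∀ x ∈ Set.Icc a b,
          S / 2 * Real.log (S / 2) ≤ |f x| * abs (Real.log |f x|) := by
        intro x hx
        have hxI : x ∈ I := ⟨by linarith [hx.1], by linarith [hx.2]⟩
        have h1 : S ^ 2 / 4 ≤ f x ^ 2 := hJ x hxI (hclose x hx)
        have h2 : S / 2 ≤ |f x| := by
          nlinarith [abs_nonneg (f x), sq_abs (f x)]
        have h3 : 1 ≤ |f x| := le_trans hShalf1 h2
        have h4 : abs (Real.log |f x|) = Real.log |f x| := abs_of_nonneg (Real.log_nonneg h3)
        rw [h4]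
        exact gn_mono hShalf1 h2
      have hm1 : (∫ x in a..b, S / 2 * Real.log (S / 2)) ≤
          ∫ x in a..b, |f x| * abs (Real.log |f x|) :=
        intervalIntegral.integral_mono_on hab intervalIntegrable_const
          (hi_A.mono_set (by rw [Set.uIcc_of_le hab, Set.uIcc_of_le hL2]; exact Set.Icc_subset_Icc ha0 hbL)) hlow
      have hm2 : (∫ x in a..b, |f x| * abs (Real.log |f x|)) ≤ A :=
        intervalIntegral.integral_mono_interval ha0 hab hbL
          (ae_of_all _ fun y => by positivity) hi_A
      rw [intervalIntegral.integral_const, smul_eq_mul, hba] at hm1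
      linarith
    -- integrated split bound
    have hsplitint : (∫ x in (0:ℝ)..L, f x ^ 4) ≤ M ^ 3 * N + S ^ 3 / Real.log M * A := by
      have hpt : ∀ x ∈ Set.Icc (0:ℝ) L,
          f x ^ 4 ≤ M ^ 3 * |f x| + S ^ 3 / Real.log M * (|f x| * abs (Real.log |f x|)) :=
        fun x hx => gn_split M S (f x) hMpos hlogM1 (hmax' x hx)
      calc (∫ x in (0:ℝ)..L, f x ^ 4)
          ≤ ∫ x in (0:ℝ)..L,
              (M ^ 3 * |f x| + S ^ 3 / Real.log M * (|f x| * abs (Real.log |f x|))) :=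
            intervalIntegral.integral_mono_on hL2 hi_f4
              ((hi_absf.const_mul _).add (hi_A.const_mul _)) hpt
        _ = M ^ 3 * N + S ^ 3 / Real.log M * A := by
            rw [intervalIntegral.integral_add (hi_absf.const_mul _) (hi_A.const_mul _),
              intervalIntegral.integral_const_mul, intervalIntegral.integral_const_mul]
    rcases le_total (S ^ 2 / (8 * H)) (L / 2) with hc | hc
    · -- ρ = S²/(8H)
      have hρeq : ρ = S ^ 2 / (8 * H) := min_eq_right hc
      have hA1 : S ^ 3 * Real.log (S / 2) / (16 * H) ≤ A := by
        rw [hρeq] at hAlow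
        have : S ^ 3 * Real.log (S / 2) / (16 * H) =
            S ^ 2 / (8 * H) * (S / 2 * Real.log (S / 2)) := by
          field_simp; ring
        linarith [hAlow, this.le, this.ge]
      have hA1' : S ^ 3 / (16 * H) ≤ A := by
        have h : S ^ 3 ≤ S ^ 3 * Real.log (S / 2) :=
          le_mul_of_one_le_right (by positivity) hlogS1
        have h16H : (0:ℝ) < 16 * H := by linarith
        have h2 : S ^ 3 / (16 * H) ≤ S ^ 3 * Real.log (S / 2) / (16 * H) := by
          rw [div_le_div_iff₀ h16H h16H]
          have := mul_le_mul_of_nonneg_right h h16H.le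
          linarith
        linarith
      have hApos : 0 < A := lt_of_lt_of_le (div_pos (pow_pos hSpos 3) (by linarith)) hA1'
      have hkey : S ^ 3 / Real.log M * A ≤ ε * H * A ^ 2 := by
        rw [div_mul_eq_mul_div, div_le_iff₀ (by linarith : (0:ℝ) < Real.log M), hlogM]
        have hHA : S ^ 3 ≤ A * (16 * H) := (div_le_iff₀ (by linarith)).1 hA1'
        have t1 : S ^ 3 * A ≤ A * (16 * H) * A := mul_le_mul_of_nonneg_right hHA hA0
        have t2 : A * (16 * H) * A = 16 * H * A ^ 2 := by ring
        have t3 : ε * H * A ^ 2 * (1 + 16 / ε) = 16 * H * A ^ 2 + ε * H * A ^ 2 := by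
          field_simp; ring
        have t4 : 0 ≤ ε * H * A ^ 2 := by positivity
        linarith
      have h2 : (M ^ 3 + S₀ ^ 3) * N = M ^ 3 * N + S₀ ^ 3 * N := by ring
      have h4 : 0 ≤ S₀ ^ 3 * N := mul_nonneg (pow_nonneg hS₀pos.le 3) hN0
      linarith
    · -- ρ = L/2
      have hρeq : ρ = L / 2 := min_eq_left hc
      have hA2 : L / 2 * (S / 2 * Real.log (S / 2)) ≤ A := by
        rw [hρeq] at hAlow; exact hAlow
      set y : ℝ := 16 / (ε * L ^ 2) with hy_def
      have hy1 : ε * L ^ 2 * y = 16 := by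
        rw [hy_def]; field_simp
      have hA3 : L * S / 4 * (1 + y) ≤ A := by
        have h : L * S / 4 * (1 + y) ≤ L / 2 * (S / 2 * Real.log (S / 2)) := by
          have h2 : L / 2 * (S / 2 * Real.log (S / 2)) = L * S / 4 * Real.log (S / 2) := by
            ring
          rw [h2]
          exact mul_le_mul_of_nonneg_left hlogS (by positivity)
        linarith
      have hSA : S ^ 2 ≤ ε * A ^ 2 := by
        have hA30 : 0 ≤ L * S / 4 * (1 + y) := by positivity
        have hsq : (L * S / 4 * (1 + y)) ^ 2 ≤ A ^ 2 := pow_le_pow_left₀ hA30 hA3 2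
        have key2 : 16 ≤ ε * L ^ 2 * (1 + y) ^ 2 := by
          have e : ε * L ^ 2 * (1 + y) ^ 2 =
              ε * L ^ 2 + 2 * (ε * L ^ 2 * y) + (ε * L ^ 2 * y) * y := by ring
          rw [e, hy1]
          have h5 : 0 < ε * L ^ 2 := by positivity
          linarith
        have step : ε * (L * S / 4 * (1 + y)) ^ 2 = S ^ 2 * (ε * L ^ 2 * (1 + y) ^ 2) / 16 := by
          ring
        have step2 : S ^ 2 ≤ ε * (L * S / 4 * (1 + y)) ^ 2 := by
          rw [step]
          have q := mul_nonneg (sq_nonneg S)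
            (by linarith : (0:ℝ) ≤ ε * L ^ 2 * (1 + y) ^ 2 - 16)
          linarith
        have q2 := mul_le_mul_of_nonneg_left hsq hε.le
        linarith
      have hf4 : (∫ x in (0:ℝ)..L, f x ^ 4) ≤ S ^ 2 * H2 := by
        have hpt : ∀ x ∈ Set.Icc (0:ℝ) L, f x ^ 4 ≤ S ^ 2 * f x ^ 2 := by
          intro x hx
          have h1 : |f x| ≤ S := hmax' x hx
          have hfx2 : f x ^ 2 ≤ S ^ 2 := by
            rw [← sq_abs]; exact pow_le_pow_left₀ (abs_nonneg _) h1 2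
          have h5 := mul_le_mul_of_nonneg_right hfx2 (sq_nonneg (f x))
          have h6 : f x ^ 4 = f x ^ 2 * f x ^ 2 := by ring
          linarith
        calc (∫ x in (0:ℝ)..L, f x ^ 4) ≤ ∫ x in (0:ℝ)..L, S ^ 2 * f x ^ 2 :=
              intervalIntegral.integral_mono_on hL2 hi_f4 (hi_f2.const_mul _) hpt
          _ = S ^ 2 * H2 := intervalIntegral.integral_const_mul _ _
      have hstep : S ^ 2 * H2 ≤ ε * H * A ^ 2 := by
        have t1 : S ^ 2 * H2 ≤ ε * A ^ 2 * H2 := mul_le_mul_of_nonneg_right hSA hH20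
        have t2 : ε * A ^ 2 * H2 ≤ ε * A ^ 2 * H :=
          mul_le_mul_of_nonneg_left hH2H (by positivity)
        have t3 : ε * A ^ 2 * H = ε * H * A ^ 2 := by ring
        linarith
      have h2 : (M ^ 3 + S₀ ^ 3) * N = M ^ 3 * N + S₀ ^ 3 * N := by ring
      have h3 : 0 ≤ M ^ 3 * N := mul_nonneg (pow_nonneg hMpos.le 3) hN0
      have h4 : 0 ≤ S₀ ^ 3 * N := mul_nonneg (pow_nonneg hS₀pos.le 3) hN0
      linarith
end
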